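/- arXiv:math/0011167 — 8 statements merged into one kernel-verified Lean document; each statement's English description precedes it below -/
import Mathlib

section
/- Distinct ordinals are not L_{∞,ω}-equivalent: if α and β are ordinals with α ≠ β, then the linear orders (α, ≤) and (β, ≤) are not L_{∞,ω}-equivalent; in particular there is no back-and-forth system of finite partial order-isomorphisms between them. -/
/-- `G` is the graph of a partial order-isomorphism between linear orders. -/
def IsOrdIso {A B : Type*} [LinearOrder A] [LinearOrder B] (G : Set (A × B)) : Prop :=
  ∀ p ∈ G, ∀ q ∈ G, ((p : A × B).1 < q.1 ↔ p.2 < q.2) ∧ (p.1 = q.1 ↔ p.2 = q.2)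

/-- A back-and-forth system of finite partial order-isomorphisms between `A` and `B`. -/
def IsFiniteBF {A B : Type*} [LinearOrder A] [LinearOrder B] (F : Set (Set (A × B))) : Prop :=
  F.Nonempty ∧ (∀ G ∈ F, G.Finite ∧ IsOrdIso G) ∧
    (∀ G ∈ F, ∀ a : A, ∃ G' ∈ F, G ⊆ G' ∧ ∃ b : B, (a, b) ∈ G') ∧
    (∀ G ∈ F, ∀ b : B, ∃ G' ∈ F, G ⊆ G' ∧ ∃ a : A, (a, b) ∈ G')

/-- Distinct ordinals, viewed as linear orders, are not `L_{∞,ω}`-equivalent: there is no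
back-and-forth system of finite partial order-isomorphisms between them. -/
theorem distinct_ordinals_not_L_infty_omega_equivalent (α β : Ordinal) (h : α ≠ β) :
    ¬ ∃ F : Set (Set (↥(Set.Iio α) × ↥(Set.Iio β))), IsFiniteBF F := by
  rintro ⟨F, ⟨G0, hG0⟩, hiso, hfwd, hbwd⟩
  -- Key: any pair in any member of the system is of the form (a, a).
  have key : ∀ a : Ordinal, ∀ ha : a < α, ∀ G ∈ F, ∀ b : ↥(Set.Iio β),
      ((⟨a, ha⟩ : ↥(Set.Iio α)), b) ∈ G → (b : Ordinal) = a := by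
    intro a
    induction a using Ordinal.induction with
    | h a IH =>
      intro ha G hG b hb
      apply le_antisymm
      · -- b ≤ a : every c < b satisfies c < a
        apply le_of_forall_lt
        intro c hc
        have hcβ : c < β := hc.trans b.2
        obtain ⟨G', hG', hsub, a', ha'⟩ := hbwd G hG ⟨c, hcβ⟩
        have hI := hiso G' hG' |>.2
        have h1 := (hI _ ha' _ (hsub hb)).1
        have hlt : (⟨c, hcβ⟩ : ↥(Set.Iio β)) < b := by
          simpa [← Subtype.coe_lt_coe] using hc
        have ha'a : (a' : Ordinal) < a := by
          have := h1.mpr hlt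
          simpa [← Subtype.coe_lt_coe] using this
        have hce : c = (a' : Ordinal) := IH a' ha'a a'.2 G' hG' ⟨c, hcβ⟩ ha'
        exact lt_of_eq_of_lt hce ha'a
      · -- a ≤ b : every c < a satisfies c < b
        apply le_of_forall_lt
        intro c hc
        have hcα : c < α := hc.trans ha
        obtain ⟨G', hG', hsub, b', hb'⟩ := hfwd G hG ⟨c, hcα⟩
        have hI := hiso G' hG' |>.2
        have h1 := (hI _ hb' _ (hsub hb)).1
        have hlt : (⟨c, hcα⟩ : ↥(Set.Iio α)) < (⟨a, ha⟩ : ↥(Set.Iio α)) := by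
          simpa [← Subtype.coe_lt_coe] using hc
        have hbb : b' < b := h1.mp hlt
        have hcb : (b' : Ordinal) = c := IH c hc hcα G' hG' b' hb'
        calc c = (b' : Ordinal) := hcb.symm
        _ < b := by simpa [← Subtype.coe_lt_coe] using hbb
  -- Now derive a contradiction.
  rcases h.lt_or_gt with hαβ | hβα
  · -- α < β : pull α back to some a < α with a = α, contradiction.
    obtain ⟨G', hG', _, a', ha'⟩ := hbwd G0 hG0 ⟨α, hαβ⟩
    have h2 : α = (a' : Ordinal) := key a' a'.2 G' hG' ⟨α, hαβ⟩ ha'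
    have h3 : (a' : Ordinal) < α := a'.2
    rw [← h2] at h3
    exact lt_irrefl α h3
  · -- β < α : push β forward to some b < β with b = β, contradiction.
    obtain ⟨G', hG', _, b', hb'⟩ := hfwd G0 hG0 ⟨β, hβα⟩
    have h2 : (b' : Ordinal) = β := key β hβα G' hG' b' hb'
    have h3 : (b' : Ordinal) < β := b'.2
    rw [h2] at h3
    exact lt_irrefl β h3
end

section
/- If T ⊆ λ^{<ω} is a well-founded tree (downward closed set of finite sequences of ordinals < λ) with depth at least κ⁺, then for any coloring c : T → κ there is a subtree S ⊆ T of depth at least ω such that c is constant on each level S ∩ λ^n. -/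
/-!
Call a finite word `w` of colors cofinal if nodes whose branch is colored by `w` have ranks
unbounded below `κ⁺`; the empty word is cofinal because the root has rank at least `κ⁺`.
Some one-letter extension of a cofinal word is again cofinal: otherwise each of the `κ`
extensions has its ranks bounded by some `γ_α < κ⁺`, the supremum of these bounds is still below
`κ⁺` by regularity, and a node colored by `w` of rank above that supremum has a child of rank at
least the supremum, colored by one of the extensions. Iterating yields `f : ℕ → κ` all of whose
prefixes are cofinal; the nodes whose branch is colored by `f` form a subtree with nodes on every
level, on each of which the coloring takes the single value prescribed by `f`.
-/

open Cardinal

/-- The "proper extension" relation on a tree of finite sequences: `extRel T ν η` holds when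
`η` is a proper initial segment of `ν` (both in `T`).  The rank of a node under this relation
is exactly its depth `dp_T`. -/
def extRel (T : Set (List Ordinal)) (ν η : T) : Prop :=
  (η : List Ordinal) <+: (ν : List Ordinal) ∧ (η : List Ordinal) ≠ (ν : List Ordinal)

section ColorWord

variable {α β : Type*} (c : List α → β)

/-- Entry `i` is the color of the node of level `i + 1` below `l`; the root is skipped, as level
`0` consists of it alone. -/
def colorWord (l : List α) : List β :=
  (List.range l.length).map fun i => c (l.take (i + 1))

@[simp]
theorem length_colorWord (l : List α) : (colorWord c l).length = l.length := by
  simp [colorWord]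

theorem colorWord_take (l : List α) (n : ℕ) :
    colorWord c (l.take n) = (colorWord c l).take n := by
  simp only [colorWord, List.length_take, ← List.map_take, List.take_range, min_comm n]
  refine List.map_congr_left fun i hi => ?_
  rw [List.take_take, min_eq_left (by simp at hi; omega)]

theorem colorWord_append_singleton (l : List α) (a : α) :
    colorWord c (l ++ [a]) = colorWord c l ++ [c (l ++ [a])] := by
  simp only [colorWord, List.length_append, List.length_singleton, List.range_succ,
    List.map_append, List.map_singleton, List.take_length_add_append,
    List.take_succ_cons, List.take_zero]
  congr 1
  refine List.map_congr_left fun i hi => ?_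
  rw [List.take_append_of_le_length (by simp at hi; omega)]

end ColorWord

def IsPrefixClosed {α : Type*} (T : Set (List α)) : Prop :=
  ∀ l ∈ T, ∀ l' : List α, l' <+: l → l' ∈ T

theorem wellFounded_extRel_of_subset {S T : Set (List Ordinal)} (hST : S ⊆ T)
    (hT : WellFounded (extRel T)) : WellFounded (extRel S) :=
  InvImage.wf (fun l : S => (⟨l, hST l.2⟩ : T)) hT

namespace extRel

open IsWellFounded Ordinal

variable {T : Set (List Ordinal)} [IsWellFounded T (extRel T)]

theorem rank_le_rank_of_isPrefix {l l' : T} (h : (l : List Ordinal) <+: l') :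
    rank (extRel T) l' ≤ rank (extRel T) l := by
  by_cases hll' : (l : List Ordinal) = l'
  · rw [Subtype.ext hll']
  · exact (rank_lt_of_rel ⟨h, hll'⟩).le

theorem exists_le_rank_of_lt_rank {l : T} {γ : Ordinal} (hγ : γ < rank (extRel T) l) :
    ∃ l' : T, extRel T l' l ∧ γ ≤ rank (extRel T) l' := by
  rw [rank_eq, Ordinal.lt_iSup_iff] at hγ
  obtain ⟨⟨l', hl'⟩, hγ⟩ := hγ
  exact ⟨l', hl', Order.lt_succ_iff.mp hγ⟩

variable (hT : IsPrefixClosed T)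
include hT

theorem exists_append_singleton_le_rank {l : T} {γ : Ordinal} (hγ : γ < rank (extRel T) l) :
    ∃ (a : Ordinal) (h : (l : List Ordinal) ++ [a] ∈ T), γ ≤ rank (extRel T) ⟨_, h⟩ := by
  obtain ⟨⟨_, hl'⟩, ⟨⟨t, rfl⟩, hne⟩, hγ⟩ := exists_le_rank_of_lt_rank hγ
  obtain ⟨a, t, rfl⟩ := List.exists_cons_of_ne_nil (by simpa using hne)
  have hpre : (l : List Ordinal) ++ [a] <+: l ++ a :: t := by simp
  exact ⟨a, hT _ hl' _ hpre, hγ.trans (rank_le_rank_of_isPrefix (l' := ⟨_, hl'⟩) hpre)⟩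

theorem natCast_le_rank_of_isPrefix (d : ℕ) (p : T) {l : List Ordinal} (hl : l ∈ T)
    (hpl : (p : List Ordinal) <+: l) (hd : (p : List Ordinal).length + d ≤ l.length) :
    (d : Ordinal) ≤ rank (extRel T) p := by
  induction d generalizing p with
  | zero => simp
  | succ d ih =>
    set q := l.take ((p : List Ordinal).length + 1)
    have hqT : q ∈ T := hT l hl q (List.take_prefix _ _)
    have hpq : extRel T ⟨q, hqT⟩ p := by
      refine ⟨List.prefix_take_iff.mpr ⟨hpl, by omega⟩, fun h => ?_⟩
      have := congrArg List.length h
      simp only [q, List.length_take] at this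
      omega
    have := ih ⟨q, hqT⟩ (List.take_prefix _ _) (by simp [q]; omega)
    rw [Nat.cast_succ, ← Order.succ_eq_add_one, Order.succ_le_iff]
    exact this.trans_lt (rank_lt_of_rel hpq)

theorem omega0_le_rank_nil (hnil : [] ∈ T) (hlen : ∀ n : ℕ, ∃ l ∈ T, l.length = n) :
    ω ≤ rank (extRel T) ⟨[], hnil⟩ :=
  Ordinal.omega0_le.2 fun n =>
    let ⟨_, hl, hn⟩ := hlen n
    natCast_le_rank_of_isPrefix hT n _ hl List.nil_prefix (by simp [hn])

end extRel

section CofinalColorWord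

open IsWellFounded

universe u

variable {T : Set (List Ordinal.{u})} [IsWellFounded T (extRel T)] {β : Type (u + 1)}

variable (T) in
def IsCofinalColorWord (c : List Ordinal.{u} → β) (θ : Ordinal.{u + 1}) (w : List β) : Prop :=
  ∀ γ < θ, ∃ l : T, colorWord c l = w ∧ γ ≤ rank (extRel T) l

theorem IsCofinalColorWord.exists_append_singleton (hT : IsPrefixClosed T)
    {c : List Ordinal.{u} → β} {θ : Ordinal.{u + 1}} (hθ : Order.IsSuccLimit θ) {A : Set β}
    (hA : #A < θ.cof) (hc : ∀ l ∈ T, c l ∈ A) {w : List β} (hw : IsCofinalColorWord T c θ w) :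
    ∃ a, IsCofinalColorWord T c θ (w ++ [a]) := by
  by_contra! hbounded
  have : ∀ a : A, ∃ γ < θ, ∀ l : T, colorWord c l = w ++ [(a : β)] → rank (extRel T) l < γ :=
    fun a => by simpa only [IsCofinalColorWord, not_forall, not_exists, not_and, not_le,
      exists_prop] using hbounded a
  choose g hgθ hg using this
  obtain ⟨l, hlw, hl⟩ := hw _ (hθ.succ_lt (Ordinal.iSup_lt_of_lt_cof hA hgθ))
  obtain ⟨a, ha, hrank⟩ := extRel.exists_append_singleton_le_rank hT (Order.succ_le_iff.mp hl)
  have hcolor : colorWord c (l ++ [a]) = w ++ [c (l ++ [a])] := by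
    rw [colorWord_append_singleton, hlw]
  exact (hrank.trans_lt (hg ⟨_, hc _ ha⟩ ⟨_, ha⟩ hcolor)).not_ge (Ordinal.le_iSup g _)

end CofinalColorWord

theorem exists_seq_of_forall_exists_append_singleton {β : Type*} (P : List β → Prop) (hnil : P [])
    (hstep : ∀ w, P w → ∃ a, P (w ++ [a])) : ∃ f : ℕ → β, ∀ n, P ((List.range n).map f) := by
  have : Nonempty β := let ⟨a, _⟩ := hstep [] hnil; ⟨a⟩
  choose! next hnext using hstep
  let W : ℕ → List β := fun n => Nat.rec [] (fun _ w => w ++ [next w]) n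
  have hW : ∀ n, (List.range n).map (fun i => next (W i)) = W n := by
    intro n
    induction n with
    | zero => rfl
    | succ n ih => rw [List.range_succ, List.map_append, ih]; rfl
  refine ⟨fun i => next (W i), fun n => ?_⟩
  rw [hW]
  induction n with
  | zero => exact hnil
  | succ n ih => exact hnext _ ih

section SubtreeAlong

variable {α β : Type*} {T : Set (List α)} {c : List α → β} {f : ℕ → β}

variable (T c f) in
def subtreeAlong : Set (List α) :=
  {l ∈ T | colorWord c l = (List.range l.length).map f}

theorem nil_mem_subtreeAlong (h : [] ∈ T) : [] ∈ subtreeAlong T c f := ⟨h, rfl⟩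

theorem isPrefixClosed_subtreeAlong (hT : IsPrefixClosed T) :
    IsPrefixClosed (subtreeAlong T c f) := by
  rintro l ⟨hlT, hl⟩ l' hl'
  refine ⟨hT l hlT l' hl', ?_⟩
  calc colorWord c l' = (colorWord c l).take l'.length := by
        rw [← colorWord_take, ← List.prefix_iff_eq_take.mp hl']
    _ = (List.range l'.length).map f := by
        rw [hl, ← List.map_take, List.take_range, min_eq_left hl'.length_le]

theorem apply_eq_of_mem_subtreeAlong {l : List α} {n : ℕ} (hl : l ∈ subtreeAlong T c f)
    (hn : l.length = n + 1) : c l = f n := by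
  have := List.map_inj_left.mp hl.2 n (List.mem_range.2 (by omega))
  rwa [List.take_of_length_le (by omega)] at this

theorem apply_eq_apply_of_mem_subtreeAlong {l l' : List α} (hl : l ∈ subtreeAlong T c f)
    (hl' : l' ∈ subtreeAlong T c f) (h : l.length = l'.length) : c l = c l' := by
  cases hn : l.length with
  | zero => rw [List.length_eq_zero_iff.mp hn, List.length_eq_zero_iff.mp (h.symm.trans hn)]
  | succ n =>
    rw [apply_eq_of_mem_subtreeAlong hl hn, apply_eq_of_mem_subtreeAlong hl' (h.symm.trans hn)]

end SubtreeAlong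

theorem subtree_of_large_depth_general (κ : Cardinal.{0}) (hκ : ℵ₀ ≤ κ)
    (T : Set (List Ordinal.{0}))
    (hdc : ∀ l ∈ T, ∀ l' : List Ordinal, l' <+: l → l' ∈ T)
    (hroot : [] ∈ T)
    (hwf : WellFounded (extRel T))
    (hdepth : Ordinal.lift.{1, 0} (Order.succ κ).ord ≤
      @IsWellFounded.rank _ (extRel T) ⟨hwf⟩ ⟨[], hroot⟩)
    (c : List Ordinal → Ordinal) (hc : ∀ l ∈ T, c l < κ.ord) :
    ∃ S : Set (List Ordinal), S ⊆ T ∧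
      (∀ l ∈ S, ∀ l' : List Ordinal, l' <+: l → l' ∈ S) ∧
      ∃ hS0 : [] ∈ S, ∃ hSwf : WellFounded (extRel S),
        Ordinal.omega0 ≤ @IsWellFounded.rank _ (extRel S) ⟨hSwf⟩ ⟨[], hS0⟩ ∧
        ∀ n : ℕ, ∀ l ∈ S, ∀ l' ∈ S, (l : List Ordinal).length = n → l'.length = n →
          c l = c l' := by
  have : IsWellFounded T (extRel T) := ⟨hwf⟩
  set θ : Ordinal.{1} := Ordinal.lift.{1} (Order.succ κ).ord
  have hθ : Order.IsSuccLimit θ :=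
    Ordinal.isSuccLimit_lift.2 (isSuccLimit_ord (hκ.trans (Order.le_succ κ)))
  have hcof : #(Set.Iio κ.ord) < θ.cof := by
    rw [Cardinal.mk_Iio_ordinal, card_ord, ← Ordinal.lift_cof, (isRegular_succ hκ).cof_ord,
      lift_lt]
    exact Order.lt_succ κ
  have hnil : IsCofinalColorWord T c θ [] := fun γ hγ => ⟨⟨[], hroot⟩, rfl, hγ.le.trans hdepth⟩
  obtain ⟨f, hf⟩ := exists_seq_of_forall_exists_append_singleton _ hnil
    fun w hw => hw.exists_append_singleton hdc hθ hcof hc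
  have hST : subtreeAlong T c f ⊆ T := fun _ hl => hl.1
  have hS : IsPrefixClosed (subtreeAlong T c f) := isPrefixClosed_subtreeAlong hdc
  have : IsWellFounded _ (extRel (subtreeAlong T c f)) :=
    ⟨wellFounded_extRel_of_subset hST hwf⟩
  refine ⟨subtreeAlong T c f, hST, hS, nil_mem_subtreeAlong hroot,
    wellFounded_extRel_of_subset hST hwf, extRel.omega0_le_rank_nil hS _ fun n => ?_,
    fun n l hl l' hl' hn hn' => apply_eq_apply_of_mem_subtreeAlong hl hl' (hn.trans hn'.symm)⟩
  obtain ⟨l, hlw, -⟩ := hf n 0 hθ.pos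
  have hlen : (l : List Ordinal).length = n := by simpa using congrArg List.length hlw
  exact ⟨l, ⟨l.2, hlen ▸ hlw⟩, hlen⟩

/-- If `T ⊆ λ^{<ω}` is a well-founded tree of depth at least `κ⁺`, then for any coloring
`c : T → κ` there is a subtree `S ⊆ T` of depth at least `ω` on each of whose levels `c` is
constant. -/
theorem subtree_of_large_depth (κ : Cardinal.{0}) (hκ : ℵ₀ ≤ κ) (lam : Cardinal.{0})
    (T : Set (List Ordinal.{0}))
    (hTlam : ∀ l ∈ T, ∀ x ∈ l, x < lam.ord)
    (hdc : ∀ l ∈ T, ∀ l' : List Ordinal, l' <+: l → l' ∈ T)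
    (hroot : [] ∈ T)
    (hwf : WellFounded (extRel T))
    (hdepth : Ordinal.lift.{1, 0} (Order.succ κ).ord ≤
      @IsWellFounded.rank _ (extRel T) ⟨hwf⟩ ⟨[], hroot⟩)
    (c : List Ordinal → Ordinal) (hc : ∀ l ∈ T, c l < κ.ord) :
    ∃ S : Set (List Ordinal), S ⊆ T ∧
      (∀ l ∈ S, ∀ l' : List Ordinal, l' <+: l → l' ∈ S) ∧
      ∃ hS0 : [] ∈ S, ∃ hSwf : WellFounded (extRel S),
        Ordinal.omega0 ≤ @IsWellFounded.rank _ (extRel S) ⟨hSwf⟩ ⟨[], hS0⟩ ∧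
        ∀ n : ℕ, ∀ l ∈ S, ∀ l' ∈ S, (l : List Ordinal).length = n → l'.length = n →
          c l = c l' :=
  subtree_of_large_depth_general κ hκ T hdc hroot hwf hdepth c hc
end

section
/- There exists a family S of 2^{ℵ₁} stationary subsets of ω₁ \ {0} such that for all distinct X, Y ∈ S, the set X \ Y is stationary in ω₁. -/
open Cardinal Set

/-- `S` is a club (closed unbounded) subset of the ordinal `o`. -/
def IsClubIn (S : Set Ordinal) (o : Ordinal) : Prop :=
  S ⊆ Set.Iio o ∧ (∀ a < o, ∃ b ∈ S, a ≤ b) ∧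
    ∀ a < o, a ≠ 0 → (∀ b < a, ∃ c ∈ S, b < c ∧ c < a) → a ∈ S

/-- `S` is a stationary subset of the ordinal `o`: it meets every club subset of `o`. -/
def IsStationaryIn (S : Set Ordinal) (o : Ordinal) : Prop :=
  ∀ C : Set Ordinal, IsClubIn C o → (S ∩ C).Nonempty

open Function Order

universe u

/-!
Ulam's matrix splits `ω₁` into `ℵ₁` pairwise disjoint stationary sets avoiding `0`: fix for every
`β < ω₁` an injection of `β` into `ℕ`, and let `U n α` be the set of `β ∈ (α, ω₁)` sending `α` to
`n`. For fixed `α` the rows `U n α` cover the club `(α, ω₁)`, so by countable completeness of the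
nonstationary ideal one of them is stationary; a single `n` works for uncountably many `α`, and
`U n α`, `U n α'` are disjoint for `α ≠ α'`.

Index `ℵ₁` such sets as `S (i, b)` with `i < ω₁` and `b : Bool`, and put `X f = ⋃ i, S (i, f i)`
for `f : ω₁ → Bool`. If `f i ≠ g i` then `X f \ X g` contains `S (i, f i)`, so it is stationary;
in particular `f ↦ X f` is injective.

Countable completeness comes from Mathlib's `IsClub`/`IsStationary` on the well-order `Iio o`,
whose images in `Ordinal` are exactly the sets `IsClubIn`/`IsStationaryIn` talk about.
-/

section ClubTransfer

variable {o : Ordinal}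

theorem isCofinal_iff_image {t : Set (Iio o)} :
    IsCofinal t ↔ ∀ a < o, ∃ b ∈ Subtype.val '' t, a ≤ b :=
  ⟨fun h a ha ↦ let ⟨b, hb, hab⟩ := h ⟨a, ha⟩; ⟨b, mem_image_of_mem _ hb, hab⟩,
    fun h a ↦ by
      obtain ⟨_, ⟨b, hb, rfl⟩, hab⟩ := h a a.2
      exact ⟨b, hb, hab⟩⟩

theorem dirSupClosed_iff_image {t : Set (Iio o)} :
    DirSupClosed t ↔ ∀ a < o, a ≠ 0 →
      (∀ b < a, ∃ c ∈ Subtype.val '' t, b < c ∧ c < a) → a ∈ Subtype.val '' t := by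
  rw [dirSupClosed_iff_of_linearOrder]
  constructor
  · intro h a ha ha0 hlim
    have hlub : IsLUB {x ∈ t | x < ⟨a, ha⟩} ⟨a, ha⟩ := by
      refine ⟨fun x hx ↦ hx.2.le, fun u hu ↦ not_lt.1 fun hua ↦ ?_⟩
      obtain ⟨_, ⟨c, hc, rfl⟩, huc, hca⟩ := hlim u hua
      exact (hu ⟨hc, hca⟩).not_gt huc
    obtain ⟨_, ⟨c, hc, rfl⟩, -, hca⟩ := hlim 0 (pos_iff_ne_zero.2 ha0)
    exact ⟨_, h (sep_subset _ _) ⟨c, hc, hca⟩ hlub, rfl⟩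
  · intro h d hdt ⟨x, hx⟩ a ha
    by_cases had : a ∈ d
    · exact hdt had
    have hlt : ∀ c ∈ d, c < a := fun c hc ↦ (ha.1 hc).lt_of_ne fun hca ↦ had (hca ▸ hc)
    have hlim : ∀ b < a.1, ∃ c ∈ Subtype.val '' t, b < c ∧ c < a.1 := by
      intro b hb
      obtain ⟨c, hcd, hbc⟩ : ∃ c ∈ d, (⟨b, hb.trans a.2⟩ : Iio o) < c := by
        by_contra! hub
        exact (ha.2 hub).not_gt hb
      exact ⟨c, mem_image_of_mem _ (hdt hcd), hbc, hlt c hcd⟩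
    obtain ⟨a', ha't, ha'⟩ := h a.1 a.2 (bot_le.trans_lt (hlt x hx) : 0 < a.1).ne' hlim
    exact Subtype.val_injective ha' ▸ ha't

theorem isClub_iff_isClubIn_image {t : Set (Iio o)} :
    IsClub t ↔ IsClubIn (Subtype.val '' t) o := by
  rw [isClub_iff, dirSupClosed_iff_image, isCofinal_iff_image, IsClubIn, and_comm]
  exact (and_iff_right (image_subset_iff.2 fun x _ ↦ x.2)).symm

theorem isStationaryIn_iff_isStationary {A : Set Ordinal} :
    IsStationaryIn A o ↔ IsStationary (Subtype.val ⁻¹' A : Set (Iio o)) := by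
  constructor
  · intro h t ht
    obtain ⟨_, hA, x, hx, rfl⟩ := h _ (isClub_iff_isClubIn_image.1 ht)
    exact ⟨x, hA, hx⟩
  · intro h C hC
    have hC' : IsClubIn (Subtype.val '' (Subtype.val ⁻¹' C : Set (Iio o))) o := by
      rwa [Subtype.image_preimage_coe, inter_eq_right.2 hC.1]
    obtain ⟨x, hA, hC⟩ := h (isClub_iff_isClubIn_image.2 hC')
    exact ⟨x, hA, hC⟩

theorem IsStationaryIn.nonempty {A : Set Ordinal} (h : IsStationaryIn A o) : A.Nonempty :=
  let ⟨x, hx⟩ := (isStationaryIn_iff_isStationary.1 h).nonempty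
  ⟨x, hx⟩

theorem IsStationaryIn.mono {A B : Set Ordinal} (h : IsStationaryIn A o) (hAB : A ⊆ B) :
    IsStationaryIn B o :=
  fun C hC ↦ (h C hC).mono (inter_subset_inter_left _ hAB)

theorem IsStationaryIn.exists_of_iUnion {ι : Type*} [Countable ι] {A : ι → Set Ordinal}
    (ho : o.cof ≠ ℵ₀) (h : IsStationaryIn (⋃ i, A i) o) : ∃ i, IsStationaryIn (A i) o := by
  have hcof : Order.cof (Iio o) ≠ ℵ₀ := by
    rwa [Ordinal.cof_Iio, ← Ordinal.lift_cof, Ne, lift_eq_aleph0]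
  simp only [isStationaryIn_iff_isStationary, preimage_iUnion] at h ⊢
  exact (isStationary_iUnion_iff_of_countable hcof).1 h

theorem isStationaryIn_Ioo (ho : IsSuccLimit o) {a : Ordinal} (ha : a < o) :
    IsStationaryIn (Ioo a o) o := by
  rw [isStationaryIn_iff_isStationary]
  refine IsStationary.of_not_isCofinal_compl fun h ↦ ?_
  obtain ⟨b, hb, hab⟩ := h ⟨succ a, ho.succ_lt ha⟩
  exact hb ⟨(lt_succ a).trans_le hab, b.2⟩

end ClubTransfer

section Ulam

theorem mk_Iio_ord_aleph_one : #(Iio (aleph.{u} 1).ord) = ℵ₁ := by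
  rw [mk_Iio_ordinal, card_ord, lift_aleph, Ordinal.lift_one]

theorem countable_Iio_of_lt_ord_aleph_one {β : Ordinal} (hβ : β < (aleph 1).ord) :
    (Iio β).Countable := by
  rw [← le_aleph0_iff_set_countable, mk_Iio_ordinal, lift_le_aleph0, ← lt_aleph_one_iff]
  exact lt_ord.1 hβ

/-- Injective on `Iio β` when `β < ω₁`; an arbitrary function for larger `β`. -/
noncomputable def ulamEnum (β : Ordinal) : Ordinal → ℕ :=
  Classical.epsilon fun f ↦ InjOn f (Iio β)

theorem injOn_ulamEnum {β : Ordinal} (hβ : β < (aleph 1).ord) : InjOn (ulamEnum β) (Iio β) :=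
  Classical.epsilon_spec (countable_iff_exists_injOn.1 (countable_Iio_of_lt_ord_aleph_one hβ))

def ulamMatrix (n : ℕ) (α : Ordinal) : Set Ordinal :=
  {β | α < β ∧ β < (aleph 1).ord ∧ ulamEnum β α = n}

theorem ulamMatrix_subset (n : ℕ) (α : Ordinal) :
    ulamMatrix n α ⊆ Iio (aleph 1).ord \ {0} :=
  fun _ ⟨hαβ, hβ, _⟩ ↦ ⟨hβ, (bot_le.trans_lt hαβ).ne'⟩

theorem iUnion_ulamMatrix (α : Ordinal) : ⋃ n, ulamMatrix n α = Ioo α (aleph 1).ord := by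
  ext β
  simp [ulamMatrix]

theorem disjoint_ulamMatrix (n : ℕ) {α α' : Ordinal} (h : α ≠ α') :
    Disjoint (ulamMatrix n α) (ulamMatrix n α') :=
  disjoint_left.2 fun _ ⟨hα, hβ, hn⟩ ⟨hα', _, hn'⟩ ↦
    h (injOn_ulamEnum hβ hα hα' (hn.trans hn'.symm))

theorem exists_isStationaryIn_ulamMatrix {α : Ordinal} (hα : α < (aleph 1).ord) :
    ∃ n, IsStationaryIn (ulamMatrix n α) (aleph 1).ord := by
  refine IsStationaryIn.exists_of_iUnion ?_ ?_
  · rw [isRegular_aleph_one.cof_ord]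
    exact aleph0_lt_aleph_one.ne'
  · rw [iUnion_ulamMatrix]
    exact isStationaryIn_Ioo (isSuccLimit_ord (aleph0_le_aleph 1)) hα

theorem exists_pairwise_disjoint_isStationaryIn {ι : Type*} (hι : #ι ≤ ℵ₁) :
    ∃ S : ι → Set Ordinal.{u}, Pairwise (Disjoint on S) ∧
      ∀ i, S i ⊆ Iio (aleph 1).ord \ {0} ∧ IsStationaryIn (S i) (aleph 1).ord := by
  have hcover : Iio (aleph.{u} 1).ord ⊆
      ⋃ n, {α | α < (aleph 1).ord ∧ IsStationaryIn (ulamMatrix n α) (aleph 1).ord} :=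
    fun α hα ↦ let ⟨n, hn⟩ := exists_isStationaryIn_ulamMatrix hα; mem_iUnion.2 ⟨n, hα, hn⟩
  have huncountable : ¬ (Iio (aleph.{u} 1).ord).Countable := by
    rw [← le_aleph0_iff_set_countable, mk_Iio_ord_aleph_one]
    exact aleph0_lt_aleph_one.not_ge
  obtain ⟨n, hn⟩ : ∃ n, ¬ {α | α < (aleph.{u} 1).ord ∧
      IsStationaryIn (ulamMatrix n α) (aleph 1).ord}.Countable := by
    by_contra! h
    exact huncountable ((countable_iUnion h).mono hcover)
  rw [← le_aleph0_iff_set_countable, ← lt_aleph_one_iff, not_lt] at hn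
  obtain ⟨e⟩ := lift_mk_le'.1 <| (lift_le.2 hι).trans <| by
    simpa only [lift_aleph, Ordinal.lift_one] using lift_le.2 hn
  refine ⟨fun i ↦ ulamMatrix n (e i), fun i j hij ↦ ?_,
    fun i ↦ ⟨ulamMatrix_subset _ _, (e i).2.2⟩⟩
  exact disjoint_ulamMatrix n (Subtype.val_injective.ne (e.injective.ne hij))

end Ulam

section GraphUnion

variable {α ι β : Type*}

def graphUnion (S : ι × β → Set α) (f : ι → β) : Set α :=
  ⋃ i, S (i, f i)

theorem subset_graphUnion_diff {S : ι × β → Set α} (hS : Pairwise (Disjoint on S))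
    {f g : ι → β} {i : ι} (hi : f i ≠ g i) : S (i, f i) ⊆ graphUnion S f \ graphUnion S g := by
  refine fun x hx ↦ ⟨mem_iUnion_of_mem i hx, fun hxg ↦ ?_⟩
  obtain ⟨j, hj⟩ := mem_iUnion.1 hxg
  have hne : (i, f i) ≠ (j, g j) := fun h ↦ by
    obtain ⟨rfl, h⟩ := Prod.mk.inj h
    exact hi h
  exact disjoint_left.1 (hS hne) hx hj

theorem graphUnion_injective {S : ι × β → Set α} (hS : Pairwise (Disjoint on S))
    (hne : ∀ p, (S p).Nonempty) : Injective (graphUnion S) := by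
  intro f g hfg
  by_contra h
  obtain ⟨i, hi⟩ := Function.ne_iff.1 h
  obtain ⟨x, hx⟩ := hne (i, f i)
  have := subset_graphUnion_diff hS hi hx
  rw [hfg, sdiff_self] at this
  exact this

end GraphUnion

/-- There is a family of `2^{ℵ₁}` stationary subsets of `ω₁ \ {0}` such that the difference of
any two distinct members is stationary in `ω₁`. -/
theorem exists_family_stationary_differences :
    ∃ 𝒮 : Set (Set Ordinal),
      Cardinal.mk 𝒮 = 2 ^ (Cardinal.aleph 1) ∧
      (∀ X ∈ 𝒮, X ⊆ Set.Iio (Cardinal.aleph 1).ord \ {0} ∧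
        IsStationaryIn X (Cardinal.aleph 1).ord) ∧
      ∀ X ∈ 𝒮, ∀ Y ∈ 𝒮, X ≠ Y → IsStationaryIn (X \ Y) (Cardinal.aleph 1).ord := by
  obtain ⟨S, hS_disj, hS⟩ :=
    exists_pairwise_disjoint_isStationaryIn (ι := Iio (aleph 1).ord × Bool) (by
      simpa using mul_le_of_le (aleph0_le_aleph 1) le_rfl
        (ofNat_lt_aleph0.le.trans (aleph0_le_aleph 1)))
  have hinj := graphUnion_injective hS_disj fun p ↦ (hS p).2.nonempty
  refine ⟨range (graphUnion S), ?_, ?_, ?_⟩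
  · rw [mk_range_eq _ hinj, mk_arrow, mk_Iio_ord_aleph_one]
    simp
  · rintro _ ⟨f, rfl⟩
    let i₀ : Iio (aleph 1).ord := ⟨0, ord_pos.2 (aleph_pos 1)⟩
    exact ⟨iUnion_subset fun i ↦ (hS _).1,
      (hS (i₀, f i₀)).2.mono (subset_iUnion (fun i ↦ S (i, f i)) i₀)⟩
  · rintro _ ⟨f, rfl⟩ _ ⟨g, rfl⟩ hfg
    obtain ⟨i, hi⟩ := Function.ne_iff.1 (ne_of_apply_ne _ hfg)
    exact (hS _).2.mono (subset_graphUnion_diff hS_disj hi)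
end

section
/- For any X, Y ⊆ ω₁\{0}, the family B(X,Y) of all order-isomorphisms f : D → R, where D is a proper initial segment of I_X such that I_X \ D has no least element and R is a proper initial segment of I_Y such that I_Y \ R has no least element, is an ℵ₁-back-and-forth system: B(X,Y) is nonempty and for every f ∈ B(X,Y) and every countable A ⊆ I_X (resp. A ⊆ I_Y) there is g ∈ B(X,Y) extending f with A ⊆ dom(g) (resp. A ⊆ range(g)). -/
open Cardinal Set

noncomputable def omega1 : Ordinal := (Cardinal.aleph 1).ord

/-- The linear order `I_Z = Σ_{i<ω₁} J_i^Z`, where `J_i^Z = ℚ` if `i ∉ Z` and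
`J_i^Z = ℚ ∩ [0,∞)` if `i ∈ Z`. -/
def ConwayOrder (Z : Set Ordinal) : Type _ :=
  {p : Ordinal ×ₗ ℚ // (ofLex p).1 < omega1 ∧ ((ofLex p).1 ∈ Z → 0 ≤ (ofLex p).2)}

noncomputable instance (Z : Set Ordinal) : LinearOrder (ConwayOrder Z) :=
  inferInstanceAs (LinearOrder {p : Ordinal ×ₗ ℚ //
    (ofLex p).1 < omega1 ∧ ((ofLex p).1 ∈ Z → 0 ≤ (ofLex p).2)})

/-- Silver's family `B(X,Y)`: graphs of order-isomorphisms between a proper initial segment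
`D` of `I_X` whose complement has no least element and a proper initial segment `R` of `I_Y`
whose complement has no least element. -/
def SilverFamily (X Y : Set Ordinal) : Set (Set (ConwayOrder X × ConwayOrder Y)) :=
  {G | IsOrdIso G ∧
    (IsLowerSet (Prod.fst '' G) ∧ Prod.fst '' G ≠ Set.univ ∧
      ¬ ∃ m ∈ (Prod.fst '' G)ᶜ, ∀ x ∈ (Prod.fst '' G)ᶜ, m ≤ x) ∧
    (IsLowerSet (Prod.snd '' G) ∧ Prod.snd '' G ≠ Set.univ ∧
      ¬ ∃ m ∈ (Prod.snd '' G)ᶜ, ∀ x ∈ (Prod.snd '' G)ᶜ, m ≤ x)}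

/-!
Cut `I_X` at an irrational point `(γ, √2)` of a block `γ < ω₁` lying above all the countably
many points to be absorbed and above the domain `D` of `G`. What lies between `D` and the cut
is a countable dense order without endpoints (no least element because `I_X \ D` has none, no
greatest because `√2` is irrational), hence a copy of `ℚ` by Cantor's theorem; the same holds on
the `I_Y` side, and gluing these copies of `ℚ` onto `G` gives the extension. The cut again has
complement without least element, so the extension stays in `B(X,Y)`. The back direction is the
forth direction for `B(Y,X)`, and `∅ ∈ B(X,Y)` because block `0` is a full copy of `ℚ`, so
`I_X` and `I_Y` have no least element.
-/

section OpenCut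

variable {α β : Type*} [LinearOrder α] [LinearOrder β]

def IsOpenCut (S : Set α) : Prop :=
  IsLowerSet S ∧ S ≠ Set.univ ∧ ¬ ∃ m ∈ Sᶜ, ∀ x ∈ Sᶜ, m ≤ x

theorem IsLowerSet.isOpenCut {S : Set α} (hS : IsLowerSet S) (hne : ∃ x, x ∉ S)
    (hmin : ∀ x ∉ S, ∃ y ∉ S, y < x) : IsOpenCut S := by
  refine ⟨hS, (ne_univ_iff_exists_notMem S).2 hne, ?_⟩
  rintro ⟨m, hm, hmin'⟩
  obtain ⟨y, hy, hym⟩ := hmin m hm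
  exact (hmin' y hy).not_gt hym

theorem isOpenCut_empty [Nonempty α] [NoMinOrder α] : IsOpenCut (∅ : Set α) :=
  isLowerSet_empty.isOpenCut ⟨Classical.arbitrary α, notMem_empty _⟩
    fun x _ => (exists_lt x).imp fun y hy => ⟨notMem_empty y, hy⟩

theorem IsLowerSet.lt_of_mem_of_notMem {S : Set α} (hS : IsLowerSet S) {x y : α}
    (hx : x ∈ S) (hy : y ∉ S) : x < y :=
  not_le.1 fun h => hy (hS h hx)

theorem nonempty_orderIso_rat_diff [DenselyOrdered α] {C D : Set α}
    (hC : IsLowerSet C) (hCmax : ∀ x ∈ C, ∃ y ∈ C, x < y)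
    (hD : IsLowerSet D) (hDmin : ¬ ∃ m ∈ Dᶜ, ∀ x ∈ Dᶜ, m ≤ x)
    (hcount : (C \ D).Countable) (hne : (C \ D).Nonempty) :
    Nonempty (↥(C \ D) ≃o ℚ) := by
  have : Countable ↥(C \ D) := hcount.to_subtype
  have : Nonempty ↥(C \ D) := hne.to_subtype
  have : (C \ D).OrdConnected := hC.ordConnected.inter hD.compl.ordConnected
  have : NoMaxOrder ↥(C \ D) := ⟨fun ⟨x, hxC, hxD⟩ => by
    obtain ⟨y, hyC, hxy⟩ := hCmax x hxC
    exact ⟨⟨y, hyC, fun hyD => hxD (hD hxy.le hyD)⟩, hxy⟩⟩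
  have : NoMinOrder ↥(C \ D) := ⟨fun ⟨x, hxC, hxD⟩ => by
    push Not at hDmin
    obtain ⟨y, hyD, hyx⟩ := hDmin x hxD
    exact ⟨⟨y, hC hyx.le hxC, hyD⟩, hyx⟩⟩
  exact Order.iso_of_countable_dense _ ℚ

theorem IsOrdIso.image_swap {G : Set (α × β)} (hG : IsOrdIso G) : IsOrdIso (Prod.swap '' G) := by
  rintro _ ⟨p, hp, rfl⟩ _ ⟨q, hq, rfl⟩
  obtain ⟨hlt, heq⟩ := hG p hp q hq
  exact ⟨hlt.symm, heq.symm⟩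

def OrderIso.graph {s : Set α} {t : Set β} (e : s ≃o t) : Set (α × β) :=
  range fun x : s => ((x : α), (e x : β))

theorem OrderIso.image_fst_graph {s : Set α} {t : Set β} (e : s ≃o t) :
    Prod.fst '' e.graph = s := by
  rw [OrderIso.graph, ← range_comp]
  exact Subtype.range_coe

theorem OrderIso.image_snd_graph {s : Set α} {t : Set β} (e : s ≃o t) :
    Prod.snd '' e.graph = t := by
  rw [OrderIso.graph, ← range_comp]
  exact (e.surjective.range_comp Subtype.val).trans Subtype.range_coe

section Gluing

variable {G : Set (α × β)} {D : Set α} {R : Set β}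

theorem IsOrdIso.union_graph (hG : IsOrdIso G) (hGD : IsLowerSet (Prod.fst '' G))
    (hGR : IsLowerSet (Prod.snd '' G)) (e : ↥(D \ Prod.fst '' G) ≃o ↥(R \ Prod.snd '' G)) :
    IsOrdIso (G ∪ e.graph) := by
  have below (p) (hp : p ∈ G) (t : ↥(D \ Prod.fst '' G)) :
      p.1 < (t : α) ∧ p.2 < (e t : β) :=
    ⟨hGD.lt_of_mem_of_notMem (mem_image_of_mem _ hp) t.2.2,
      hGR.lt_of_mem_of_notMem (mem_image_of_mem _ hp) (e t).2.2⟩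
  rintro p (hp | ⟨t, rfl⟩) q (hq | ⟨s, rfl⟩)
  · exact hG p hp q hq
  · obtain ⟨h1, h2⟩ := below p hp s
    exact ⟨iff_of_true h1 h2, iff_of_false h1.ne h2.ne⟩
  · obtain ⟨h1, h2⟩ := below q hq t
    exact ⟨iff_of_false h1.asymm h2.asymm, iff_of_false h1.ne' h2.ne'⟩
  · exact ⟨Subtype.coe_lt_coe.trans (e.lt_iff_lt.symm.trans Subtype.coe_lt_coe.symm),
      Subtype.coe_inj.trans (e.injective.eq_iff.symm.trans Subtype.coe_inj.symm)⟩

theorem image_fst_union_graph (hD : Prod.fst '' G ⊆ D)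
    (e : ↥(D \ Prod.fst '' G) ≃o ↥(R \ Prod.snd '' G)) :
    Prod.fst '' (G ∪ e.graph) = D := by
  rw [image_union, e.image_fst_graph, union_sdiff_cancel hD]

theorem image_snd_union_graph (hR : Prod.snd '' G ⊆ R)
    (e : ↥(D \ Prod.fst '' G) ≃o ↥(R \ Prod.snd '' G)) :
    Prod.snd '' (G ∪ e.graph) = R := by
  rw [image_union, e.image_snd_graph, union_sdiff_cancel hR]

end Gluing

end OpenCut

theorem omega1_eq_omega_one : omega1 = Ordinal.omega 1 :=
  ord_aleph 1

theorem omega1_pos : 0 < omega1 :=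
  omega1_eq_omega_one ▸ Ordinal.omega_pos 1

theorem add_one_lt_omega1 {γ : Ordinal} (hγ : γ < omega1) : γ + 1 < omega1 :=
  (isSuccLimit_ord (aleph0_le_aleph 1)).add_one_lt hγ

theorem exists_lt_omega1_of_countable {ι : Type*} [Countable ι] {f : ι → Ordinal}
    (hf : ∀ i, f i < omega1) : ∃ γ < omega1, ∀ i, f i < γ := by
  have hsup : ⨆ i, f i < omega1 :=
    omega1_eq_omega_one ▸ Ordinal.iSup_lt_omega_one (omega1_eq_omega_one ▸ hf)
  exact ⟨_, add_one_lt_omega1 hsup, fun i => Order.lt_add_one_iff.2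
    (le_ciSup ⟨omega1, by rintro _ ⟨j, rfl⟩; exact (hf j).le⟩ i)⟩

theorem countable_Iio_of_lt_omega1 {γ : Ordinal} (hγ : γ < omega1) : (Iio γ).Countable := by
  rw [← le_aleph0_iff_set_countable, mk_Iio_ordinal, lift_le_aleph0, ← lt_aleph_one_iff]
  exact lt_ord.1 hγ

namespace ConwayOrder

variable {Z : Set Ordinal}

def index (p : ConwayOrder Z) : Ordinal := (ofLex p.1).1

def coord (p : ConwayOrder Z) : ℚ := (ofLex p.1).2

theorem index_lt_omega1 (p : ConwayOrder Z) : p.index < omega1 := p.2.1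

theorem coord_nonneg (p : ConwayOrder Z) (h : p.index ∈ Z) : 0 ≤ p.coord := p.2.2 h

def mk (i : Ordinal) (q : ℚ) (hi : i < omega1) (hq : i ∈ Z → 0 ≤ q) : ConwayOrder Z :=
  ⟨toLex (i, q), hi, hq⟩

@[simp] theorem index_mk {i q hi hq} : (mk (Z := Z) i q hi hq).index = i := rfl

@[simp] theorem coord_mk {i q hi hq} : (mk (Z := Z) i q hi hq).coord = q := rfl

theorem injective_index_coord :
    Function.Injective fun p : ConwayOrder Z => (p.index, p.coord) :=
  fun _ _ h => Subtype.ext (congrArg toLex h)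

theorem lt_iff {p q : ConwayOrder Z} :
    p < q ↔ p.index < q.index ∨ p.index = q.index ∧ p.coord < q.coord :=
  Prod.Lex.lt_iff (x := p.1) (y := q.1)

theorem index_mono : Monotone (index : ConwayOrder Z → Ordinal) := fun p q h =>
  (Prod.Lex.le_iff (x := p.1) (y := q.1)).1 h |>.elim le_of_lt (·.1.le)

instance : Nonempty (ConwayOrder Z) := ⟨mk 0 0 omega1_pos fun _ => le_rfl⟩

instance : DenselyOrdered (ConwayOrder Z) where
  dense p q h := by
    have hp (r : ℚ) (hr : p.coord ≤ r) : p.index ∈ Z → 0 ≤ r := fun hz =>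
      (p.coord_nonneg hz).trans hr
    rcases lt_iff.1 h with h | ⟨h, hc⟩
    · refine ⟨mk p.index (p.coord + 1) p.index_lt_omega1 (hp _ (by linarith)), ?_, ?_⟩ <;>
        simp [lt_iff, h]
    · obtain ⟨r, hpr, hrq⟩ := exists_between hc
      exact ⟨mk p.index r p.index_lt_omega1 (hp r hpr.le), by simp [lt_iff, hpr],
        by simp [lt_iff, h, hrq]⟩

theorem noMinOrder_of_zero_notMem (hZ : 0 ∉ Z) : NoMinOrder (ConwayOrder Z) where
  exists_lt p := by
    refine ⟨mk 0 (p.coord - 1) omega1_pos (absurd · hZ), ?_⟩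
    rcases eq_zero_or_pos p.index with h | h <;> simp [lt_iff, h]

theorem exists_index_lt_of_countable {A : Set (ConwayOrder Z)} (hA : A.Countable) :
    ∃ γ < omega1, ∀ a ∈ A, a.index < γ :=
  have : Countable A := hA.to_subtype
  (exists_lt_omega1_of_countable fun a : A => index_lt_omega1 a.1).imp fun _ ⟨hγ, hA⟩ =>
    ⟨hγ, fun a ha => hA ⟨a, ha⟩⟩

theorem countable_setOf_index_lt {γ : Ordinal} (hγ : γ < omega1) :
    {p : ConwayOrder Z | p.index < γ}.Countable :=
  (((countable_Iio_of_lt_omega1 hγ).prod countable_univ).preimage injective_index_coord).mono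
    fun _ hp => mk_mem_prod (t := univ) hp (mem_univ _)

def cut (Z : Set Ordinal) (γ : Ordinal) : Set (ConwayOrder Z) :=
  {p | p.index < γ ∨ p.index = γ ∧ (p.coord : ℝ) < √2}

theorem index_le_of_mem_cut {γ : Ordinal} {p : ConwayOrder Z} (hp : p ∈ cut Z γ) :
    p.index ≤ γ :=
  hp.elim le_of_lt (·.1.le)

theorem isLowerSet_cut (γ : Ordinal) : IsLowerSet (cut Z γ) := by
  rintro q p hpq hq
  rcases hpq.lt_or_eq with h | rfl
  · rcases lt_iff.1 h with h | ⟨h, hc⟩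
    · exact Or.inl (h.trans_le (index_le_of_mem_cut hq))
    · rw [cut, mem_ofPred, h]
      exact hq.imp_right fun hq => ⟨hq.1, lt_trans (by exact_mod_cast hc) hq.2⟩
  · exact hq

theorem countable_cut {γ : Ordinal} (hγ : γ < omega1) : (cut Z γ).Countable :=
  (countable_setOf_index_lt (add_one_lt_omega1 hγ)).mono fun _ hp =>
    Order.lt_add_one_iff.2 (index_le_of_mem_cut hp)

theorem exists_gt_of_mem_cut {γ : Ordinal} (hγ : γ < omega1) :
    ∀ p ∈ cut Z γ, ∃ q ∈ cut Z γ, p < q := by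
  rintro p (h | ⟨h, hc⟩)
  · exact ⟨mk γ 0 hγ fun _ => le_rfl, Or.inr ⟨rfl, by simp⟩, lt_iff.2 (Or.inl h)⟩
  · obtain ⟨r, hpr, hr⟩ := exists_rat_btwn hc
    have hpr : p.coord < r := by exact_mod_cast hpr
    exact ⟨mk γ r hγ fun hz => (p.coord_nonneg (h ▸ hz)).trans hpr.le, Or.inr ⟨rfl, hr⟩,
      lt_iff.2 (Or.inr ⟨h, hpr⟩)⟩

theorem isOpenCut_cut {γ : Ordinal} (hγ : γ < omega1) : IsOpenCut (cut Z γ) := by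
  have above (r : ℚ) (hr : √2 < r) : ∃ q ∉ cut Z γ, q.index = γ ∧ q.coord = r :=
    ⟨mk γ r hγ fun _ => by exact_mod_cast (Real.sqrt_nonneg 2).trans hr.le,
      by simp [cut, hr.not_gt], rfl, rfl⟩
  have two : √2 < ((2 : ℚ) : ℝ) := by
    rw [Real.sqrt_lt' (by norm_num)]
    norm_num
  refine (isLowerSet_cut γ).isOpenCut ((above 2 two).imp fun _ h => h.1) fun p hp => ?_
  simp only [cut, mem_ofPred_eq, not_or, not_and, not_lt] at hp
  rcases hp.1.lt_or_eq with h | h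
  · obtain ⟨q, hq, hqγ, -⟩ := above 2 two
    exact ⟨q, hq, lt_iff.2 (Or.inl (hqγ ▸ h))⟩
  · have hc : √2 < p.coord := (hp.2 h.symm).lt_of_ne (irrational_sqrt_two.ne_rat _)
    obtain ⟨r, hr, hrp⟩ := exists_rat_btwn hc
    obtain ⟨q, hq, hqγ, rfl⟩ := above r hr
    exact ⟨q, hq, lt_iff.2 (Or.inr ⟨hqγ.trans h, by exact_mod_cast hrp⟩)⟩

theorem nonempty_orderIso_rat_cut_diff {γ : Ordinal} (hγ : γ < omega1) {D : Set (ConwayOrder Z)}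
    (hD : IsLowerSet D) (hDmin : ¬ ∃ m ∈ Dᶜ, ∀ x ∈ Dᶜ, m ≤ x)
    (hDγ : D ⊆ {p | p.index < γ}) : Nonempty (↥(cut Z γ \ D) ≃o ℚ) :=
  nonempty_orderIso_rat_diff (isLowerSet_cut γ) (exists_gt_of_mem_cut hγ) hD hDmin
    ((countable_cut hγ).mono sdiff_subset)
    ⟨mk γ 0 hγ fun _ => le_rfl, Or.inr ⟨rfl, by simp⟩, fun h => lt_irrefl γ (hDγ h)⟩

end ConwayOrder

section SilverFamily

open ConwayOrder

variable {X Y : Set Ordinal}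

theorem mem_silverFamily_iff {G : Set (ConwayOrder X × ConwayOrder Y)} :
    G ∈ SilverFamily X Y ↔
      IsOrdIso G ∧ IsOpenCut (Prod.fst '' G) ∧ IsOpenCut (Prod.snd '' G) :=
  Iff.rfl

theorem empty_mem_silverFamily (hX : 0 ∉ X) (hY : 0 ∉ Y) :
    (∅ : Set (ConwayOrder X × ConwayOrder Y)) ∈ SilverFamily X Y := by
  have := noMinOrder_of_zero_notMem hX
  have := noMinOrder_of_zero_notMem hY
  refine mem_silverFamily_iff.2 ⟨fun p hp => absurd hp (notMem_empty p), ?_, ?_⟩ <;>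
    rw [image_empty] <;> exact isOpenCut_empty

theorem image_swap_mem_silverFamily {G : Set (ConwayOrder X × ConwayOrder Y)}
    (hG : G ∈ SilverFamily X Y) : Prod.swap '' G ∈ SilverFamily Y X := by
  obtain ⟨hiso, hD, hR⟩ := hG
  refine ⟨hiso.image_swap, ?_, ?_⟩ <;> rwa [image_image]

theorem exists_superset_mem_silverFamily_subset_image_fst
    {G : Set (ConwayOrder X × ConwayOrder Y)}
    (hG : G ∈ SilverFamily X Y) {A : Set (ConwayOrder X)} (hA : A.Countable) :
    ∃ G' ∈ SilverFamily X Y, G ⊆ G' ∧ A ⊆ Prod.fst '' G' := by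
  obtain ⟨hiso, ⟨hD, hDne, hDmin⟩, hR, hRne, hRmin⟩ := mem_silverFamily_iff.1 hG
  obtain ⟨c, hc⟩ := (ne_univ_iff_exists_notMem _).1 hDne
  obtain ⟨c', hc'⟩ := (ne_univ_iff_exists_notMem _).1 hRne
  obtain ⟨γ, hγ, hγA⟩ := exists_index_lt_of_countable (hA.insert c)
  obtain ⟨δ, hδ, hδc'⟩ := exists_index_lt_of_countable (countable_singleton c')
  have hDγ : Prod.fst '' G ⊆ {p | p.index < γ} := fun d hd =>
    (index_mono (hD.lt_of_mem_of_notMem hd hc).le).trans_lt (hγA c (mem_insert c A))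
  have hRδ : Prod.snd '' G ⊆ {p | p.index < δ} := fun d hd =>
    (index_mono (hR.lt_of_mem_of_notMem hd hc').le).trans_lt (hδc' c' rfl)
  obtain ⟨eX⟩ := nonempty_orderIso_rat_cut_diff hγ hD hDmin hDγ
  obtain ⟨eY⟩ := nonempty_orderIso_rat_cut_diff hδ hR hRmin hRδ
  let e := eX.trans eY.symm
  have hfst := image_fst_union_graph (hDγ.trans fun _ => Or.inl) e
  have hsnd := image_snd_union_graph (hRδ.trans fun _ => Or.inl) e
  refine ⟨G ∪ e.graph, ⟨hiso.union_graph hD hR e, ?_, ?_⟩, subset_union_left, ?_⟩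
  · exact hfst ▸ isOpenCut_cut hγ
  · exact hsnd ▸ isOpenCut_cut hδ
  · exact hfst ▸ fun a ha => Or.inl (hγA a (mem_insert_of_mem c ha))

theorem exists_superset_mem_silverFamily_subset_image_snd
    {G : Set (ConwayOrder X × ConwayOrder Y)}
    (hG : G ∈ SilverFamily X Y) {A : Set (ConwayOrder Y)} (hA : A.Countable) :
    ∃ G' ∈ SilverFamily X Y, G ⊆ G' ∧ A ⊆ Prod.snd '' G' := by
  obtain ⟨G', hG', hGG', hAG'⟩ :=
    exists_superset_mem_silverFamily_subset_image_fst (image_swap_mem_silverFamily hG) hA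
  refine ⟨Prod.swap '' G', image_swap_mem_silverFamily hG', ?_, ?_⟩
  · rw [image_swap_eq_preimage_swap]
    exact fun g hg => hGG' (mem_image_of_mem _ hg)
  · rwa [image_image]

end SilverFamily

/-- `B(X,Y)` is an `ℵ₁`-back-and-forth system: it is nonempty, and any member extends to a
member absorbing any prescribed countable subset on either side.  (This witnesses that `I_X`
and `I_Y` are `L_{∞,ℵ₁}`-equivalent.) -/
theorem silverFamily_is_aleph1_back_and_forth (X Y : Set Ordinal)
    (hX : X ⊆ Set.Iio omega1 \ {0}) (hY : Y ⊆ Set.Iio omega1 \ {0}) :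
    (SilverFamily X Y).Nonempty ∧
    (∀ G ∈ SilverFamily X Y, ∀ A : Set (ConwayOrder X), A.Countable →
      ∃ G' ∈ SilverFamily X Y, G ⊆ G' ∧ A ⊆ Prod.fst '' G') ∧
    (∀ G ∈ SilverFamily X Y, ∀ A : Set (ConwayOrder Y), A.Countable →
      ∃ G' ∈ SilverFamily X Y, G ⊆ G' ∧ A ⊆ Prod.snd '' G') :=
  ⟨⟨∅, empty_mem_silverFamily (fun h => (hX h).2 rfl) (fun h => (hY h).2 rfl)⟩,
    fun _ hG _ hA => exists_superset_mem_silverFamily_subset_image_fst hG hA,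
    fun _ hG _ hA => exists_superset_mem_silverFamily_subset_image_snd hG hA⟩
end

section
/- Consequently, for each uncountable cardinal λ, the linear orders J_α = (η·λ)·α for nonzero ordinals α are pairwise non-L_{∞,λ}-equivalent: if α ≠ β then J_α and J_β are not L_{∞,λ}-equivalent. Here η is the order type of ℚ and · is order-type multiplication. -/
open Cardinal Set

/-- The linear order of order type `(η·λ)·α`, where `η` is the order type of `ℚ`:
the `α`-fold lexicographic sum of the `λ`-fold lexicographic sum of copies of `ℚ`. -/
def JOrd (lam : Cardinal.{0}) (α : Ordinal.{0}) : Type 1 :=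
  {p : Ordinal ×ₗ Ordinal ×ₗ ℚ //
    (ofLex p).1 < α ∧ (ofLex (ofLex p).2).1 < lam.ord}

noncomputable instance (lam : Cardinal.{0}) (α : Ordinal.{0}) : LinearOrder (JOrd lam α) :=
  inferInstanceAs (LinearOrder {p : Ordinal ×ₗ Ordinal ×ₗ ℚ //
    (ofLex p).1 < α ∧ (ofLex (ofLex p).2).1 < lam.ord})

/-- A back-and-forth system witnessing `L_{∞,λ}`-equivalence: a nonempty family of partial
order-isomorphisms of domain size `< λ`, closed under extension covering any subset of size
`< λ` on either side. -/
def IsBFSystem {A B : Type 1} [LinearOrder A] [LinearOrder B] (lam : Cardinal.{1})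
    (F : Set (Set (A × B))) : Prop :=
  F.Nonempty ∧ (∀ G ∈ F, IsOrdIso G ∧ Cardinal.mk G < lam) ∧
    (∀ G ∈ F, ∀ S : Set A, Cardinal.mk S < lam →
      ∃ G' ∈ F, G ⊆ G' ∧ S ⊆ Prod.fst '' G') ∧
    (∀ G ∈ F, ∀ S : Set B, Cardinal.mk S < lam →
      ∃ G' ∈ F, G ⊆ G' ∧ S ⊆ Prod.snd '' G')


/-!
Call two points close when fewer than `λ` points lie strictly between them. The partial
isomorphisms of a back-and-forth system preserve closeness, and in `J_α` the closeness classes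
are the blocks `η·λ`, indexed in order by `α`. By well-founded induction every matched pair then
lies in blocks of the same index, so for `α < β` a point in block `α` of `J_β` has no partner.
-/

namespace IsOrdIso

variable {A B : Type*} [LinearOrder A] [LinearOrder B] {G : Set (A × B)}

lemma swap (hG : IsOrdIso G) : IsOrdIso (Prod.swap '' G) := by
  rintro _ ⟨p, hp, rfl⟩ _ ⟨q, hq, rfl⟩
  exact ⟨(hG p hp q hq).1.symm, (hG p hp q hq).2.symm⟩

end IsOrdIso

namespace IsBFSystem

variable {A B : Type 1} [LinearOrder A] [LinearOrder B] {κ : Cardinal.{1}}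
  {F : Set (Set (A × B))} {G : Set (A × B)}

lemma swap (hF : IsBFSystem κ F) : IsBFSystem κ (image Prod.swap '' F) := by
  obtain ⟨hne, hiso, hextA, hextB⟩ := hF
  refine ⟨hne.image _, ?_, ?_, ?_⟩
  · rintro _ ⟨G, hG, rfl⟩
    exact ⟨(hiso G hG).1.swap, mk_image_le.trans_lt (hiso G hG).2⟩
  · rintro _ ⟨G, hG, rfl⟩ S hS
    obtain ⟨G', hG', hGG', hcov⟩ := hextB G hG S hS
    refine ⟨Prod.swap '' G', mem_image_of_mem _ hG', image_mono hGG', ?_⟩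
    rwa [← image_comp]
  · rintro _ ⟨G, hG, rfl⟩ S hS
    obtain ⟨G', hG', hGG', hcov⟩ := hextA G hG S hS
    refine ⟨Prod.swap '' G', mem_image_of_mem _ hG', image_mono hGG', ?_⟩
    rwa [← image_comp]

lemma exists_snd_eq (hF : IsBFSystem κ F) (hκ : 1 < κ) (hG : G ∈ F) (b : B) :
    ∃ G' ∈ F, G ⊆ G' ∧ ∃ p ∈ G', p.2 = b := by
  obtain ⟨G', hG', hGG', hcov⟩ := hF.2.2.2 G hG {b} (by rwa [mk_singleton])
  exact ⟨G', hG', hGG', hcov rfl⟩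

/-- Cover the small interval `(p.1, q.1)` by some `G'`; a point of
`(p.2, q.2)` missed by `G'` is matched in a further extension by a point of `(p.1, q.1)`,
which `G'` already matched. -/
lemma mk_Ioo_snd_lt (hF : IsBFSystem κ F) (hκ : 1 < κ) (hG : G ∈ F) {p q : A × B}
    (hp : p ∈ G) (hq : q ∈ G) (h : #(Ioo p.1 q.1) < κ) : #(Ioo p.2 q.2) < κ := by
  by_contra! hbig
  obtain ⟨G', hG', hGG', hcov⟩ := hF.2.2.1 G hG _ h
  obtain ⟨c, hc, hcG'⟩ : ∃ c ∈ Ioo p.2 q.2, c ∉ Prod.snd '' G' := by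
    by_contra! hsub
    exact (hbig.trans (mk_le_mk_of_subset hsub)).not_gt
      (mk_image_le.trans_lt (hF.2.1 G' hG').2)
  obtain ⟨G'', hG'', hG'G'', r, hr, rfl⟩ := hF.exists_snd_eq hκ hG' c
  have hiso := (hF.2.1 G'' hG'').1
  have hr1 : r.1 ∈ Ioo p.1 q.1 :=
    ⟨(hiso p (hG'G'' (hGG' hp)) r hr).1.2 hc.1, (hiso r hr q (hG'G'' (hGG' hq))).1.2 hc.2⟩
  obtain ⟨s, hs, hsr⟩ := hcov hr1
  exact hcG' ⟨s, hs, (hiso s (hG'G'' hs) r hr).2.1 hsr⟩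

lemma mk_Ioo_fst_lt_iff (hF : IsBFSystem κ F) (hκ : 1 < κ) (hG : G ∈ F) {p q : A × B}
    (hp : p ∈ G) (hq : q ∈ G) : #(Ioo p.1 q.1) < κ ↔ #(Ioo p.2 q.2) < κ :=
  ⟨hF.mk_Ioo_snd_lt hκ hG hp hq,
    hF.swap.mk_Ioo_snd_lt hκ (mem_image_of_mem _ hG) (mem_image_of_mem _ hp)
      (mem_image_of_mem _ hq)⟩

variable {ι : Type*} [LinearOrder ι] [WellFoundedLT ι] {fA : A → ι} {fB : B → ι}

/-- If `fA p.1 < fB p.2`, a point of `B` of index `fA p.1` gets matched below `p.1`, hence (by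
`hpres`) with a point of strictly smaller index, against the induction hypothesis. -/
lemma apply_snd_le_apply_fst (hF : IsBFSystem κ F) (hκ : 1 < κ) (hfA : Monotone fA)
    (hfB : Monotone fB) (hB : IsLowerSet (range fB))
    (hpres : ∀ G ∈ F, ∀ p ∈ G, ∀ q ∈ G, fA p.1 = fA q.1 → fB p.2 = fB q.2)
    (hG : G ∈ F) {p : A × B} (hp : p ∈ G) : fB p.2 ≤ fA p.1 := by
  induction hγ : fA p.1 using WellFoundedLT.induction generalizing G p with
  | ind γ IH =>
    subst hγ
    by_contra! hlt
    obtain ⟨b, hb⟩ := hB hlt.le (mem_range_self p.2)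
    obtain ⟨G', hG', hGG', q, hq, rfl⟩ := hF.exists_snd_eq hκ hG b
    have hqp : q.1 < p.1 :=
      ((hF.2.1 G' hG').1 q hq p (hGG' hp)).1.2 (hfB.reflect_lt (hb ▸ hlt))
    have hq1 : fA q.1 < fA p.1 := (hfA hqp.le).lt_of_ne fun heq =>
      hlt.ne' (hb ▸ (hpres G' hG' q hq p (hGG' hp) heq).symm)
    exact ((IH _ hq1 hG' hq rfl).trans_lt hq1).ne hb

lemma apply_fst_eq_apply_snd (hF : IsBFSystem κ F) (hκ : 1 < κ) (hfA : Monotone fA)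
    (hfB : Monotone fB) (hA : IsLowerSet (range fA)) (hB : IsLowerSet (range fB))
    (hpres : ∀ G ∈ F, ∀ p ∈ G, ∀ q ∈ G, fA p.1 = fA q.1 ↔ fB p.2 = fB q.2)
    (hG : G ∈ F) {p : A × B} (hp : p ∈ G) : fA p.1 = fB p.2 := by
  refine le_antisymm ?_ (hF.apply_snd_le_apply_fst hκ hfA hfB hB
    (fun G hG p hp q hq => (hpres G hG p hp q hq).1) hG hp)
  refine hF.swap.apply_snd_le_apply_fst hκ hfB hfA hA ?_ (mem_image_of_mem _ hG)
    (mem_image_of_mem _ hp)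
  rintro _ ⟨G, hG, rfl⟩ _ ⟨p, hp, rfl⟩ _ ⟨q, hq, rfl⟩
  exact (hpres G hG p hp q hq).2

end IsBFSystem

namespace JOrd

variable {lam : Cardinal.{0}} {α β : Ordinal.{0}}

/-- The index in `α` of the copy of `η·λ` containing `x`. -/
def block (x : JOrd lam α) : Ordinal.{0} := (ofLex x.1).1

/-- The index in `λ` of the copy of `η` containing `x`, within its block. -/
def copy (x : JOrd lam α) : Ordinal.{0} := (ofLex (ofLex x.1).2).1

def mk (γ δ : Ordinal.{0}) (q : ℚ) (hγ : γ < α) (hδ : δ < lam.ord) : JOrd lam α :=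
  ⟨toLex (γ, toLex (δ, q)), hγ, hδ⟩

lemma block_lt (x : JOrd lam α) : x.block < α := x.2.1

lemma copy_lt (x : JOrd lam α) : x.copy < lam.ord := x.2.2

lemma lt_iff {x y : JOrd lam α} :
    x < y ↔ x.block < y.block ∨ x.block = y.block ∧ (ofLex x.1).2 < (ofLex y.1).2 :=
  Prod.Lex.lt_iff

lemma block_mono : Monotone (block : JOrd lam α → Ordinal) :=
  fun _ _ h => Prod.Lex.monotone_fst _ _ h

lemma isLowerSet_range_block (hlam : lam ≠ 0) :
    IsLowerSet (range (block : JOrd lam α → Ordinal)) := by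
  rintro _ γ hγ ⟨x, rfl⟩
  exact ⟨mk γ 0 0 (hγ.trans_lt x.block_lt) (Cardinal.ord_pos.2 (pos_iff_ne_zero.2 hlam)), rfl⟩

lemma mk_Ioo_lt_of_block_eq (hlam : ℵ₀ < lam) {x y : JOrd lam α} (h : x.block = y.block) :
    #(Ioo x y) < lift lam := by
  let f : Iic y.copy × ℚ → JOrd lam α := fun p =>
    mk y.block p.1 p.2 y.block_lt (p.1.2.trans_lt y.copy_lt)
  have hsub : Ioo x y ⊆ range f := by
    rintro z ⟨hxz, hzy⟩
    have hz : z.block = y.block := le_antisymm (block_mono hzy.le) (h ▸ block_mono hxz.le)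
    have hcopy : z.copy ≤ y.copy := by
      rcases lt_iff.1 hzy with hlt | ⟨-, hlt⟩
      · exact absurd hz hlt.ne
      · exact Prod.Lex.monotone_fst _ _ hlt.le
    exact ⟨(⟨z.copy, mem_Iic.2 hcopy⟩, (ofLex (ofLex z.1).2).2),
      Subtype.ext (by dsimp only [f, mk]; rw [← hz]; rfl)⟩
  have hsucc : (Order.succ y.copy).card < lam :=
    lt_ord.1 ((isSuccLimit_ord hlam.le).succ_lt y.copy_lt)
  calc #(Ioo x y) ≤ #(Iic y.copy × ℚ) := (mk_le_mk_of_subset hsub).trans mk_range_le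
    _ = lift ((Order.succ y.copy).card * ℵ₀) := by
      rw [mk_prod, ← Order.Iio_succ, mk_Iio_ordinal, Cardinal.mkRat]; simp
    _ < lift lam := lift_lt.2 (mul_lt_of_lt hlam.le hsucc hlam)

lemma lift_le_mk_Ioo_of_block_lt (hlam : ℵ₀ ≤ lam) {x y : JOrd lam α}
    (h : x.block < y.block) :
    lift lam ≤ #(Ioo x y) := by
  have hadd := Ordinal.isPrincipal_add_ord hlam
  have hsucc : x.copy + 1 < lam.ord := (isSuccLimit_ord hlam).succ_lt x.copy_lt
  let f : Iio lam.ord → Ioo x y := fun δ =>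
    ⟨mk x.block (x.copy + 1 + δ) 0 x.block_lt (hadd hsucc δ.2),
      lt_iff.2 (Or.inr ⟨rfl, Prod.Lex.lt_iff.2 (Or.inl
        ((Order.lt_add_one_iff.2 le_rfl).trans_le le_self_add))⟩),
      lt_iff.2 (Or.inl h)⟩
  have hf : Function.Injective f := fun δ δ' hδ =>
    Subtype.ext (add_left_cancel (congrArg (fun z : Ioo x y => z.1.copy) hδ))
  simpa [mk_Iio_ordinal] using mk_le_of_injective hf

lemma block_eq_iff (hlam : ℵ₀ < lam) {x y : JOrd lam α} :
    x.block = y.block ↔ #(Ioo x y) < lift lam ∧ #(Ioo y x) < lift lam := by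
  refine ⟨fun h => ⟨mk_Ioo_lt_of_block_eq hlam h, mk_Ioo_lt_of_block_eq hlam h.symm⟩, ?_⟩
  rintro ⟨hxy, hyx⟩
  rcases lt_trichotomy x.block y.block with h | h | h
  · exact absurd (lift_le_mk_Ioo_of_block_lt hlam.le h) hxy.not_ge
  · exact h
  · exact absurd (lift_le_mk_Ioo_of_block_lt hlam.le h) hyx.not_ge

lemma block_fst_eq_block_snd (hlam : ℵ₀ < lam) {F : Set (Set (JOrd lam α × JOrd lam β))}
    (hF : IsBFSystem (lift lam) F) {G : Set (JOrd lam α × JOrd lam β)} (hG : G ∈ F)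
    {p : JOrd lam α × JOrd lam β} (hp : p ∈ G) : p.1.block = p.2.block := by
  have hκ : 1 < lift.{1} lam := by simpa using one_lt_aleph0.trans hlam
  have hlam0 : lam ≠ 0 := (aleph0_pos.trans hlam).ne'
  refine hF.apply_fst_eq_apply_snd hκ block_mono block_mono (isLowerSet_range_block hlam0)
    (isLowerSet_range_block hlam0) (fun G hG p hp q hq => ?_) hG hp
  rw [block_eq_iff hlam, block_eq_iff hlam, hF.mk_Ioo_fst_lt_iff hκ hG hp hq,
    hF.mk_Ioo_fst_lt_iff hκ hG hq hp]

lemma not_isBFSystem_of_lt (hlam : ℵ₀ < lam) (hαβ : α < β)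
    (F : Set (Set (JOrd lam α × JOrd lam β))) : ¬ IsBFSystem (lift lam) F := by
  intro hF
  obtain ⟨G, hG⟩ := hF.1
  have hκ : 1 < lift.{1} lam := by simpa using one_lt_aleph0.trans hlam
  obtain ⟨G', hG', -, p, hp, hpb⟩ := hF.exists_snd_eq hκ hG
    (mk α 0 0 hαβ (ord_pos.2 (aleph0_pos.trans hlam)))
  have hblock := block_fst_eq_block_snd hlam hF hG' hp
  rw [hpb] at hblock
  exact p.1.block_lt.ne hblock

end JOrd

theorem JOrd_not_L_infty_lam_equivalent_general (lam : Cardinal.{0}) (hlam : Cardinal.aleph0 < lam)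
    (α β : Ordinal.{0}) (hne : α ≠ β) :
    ¬ ∃ F : Set (Set (JOrd lam α × JOrd lam β)), IsBFSystem (Cardinal.lift.{1, 0} lam) F := by
  rintro ⟨F, hF⟩
  rcases hne.lt_or_gt with h | h
  · exact JOrd.not_isBFSystem_of_lt hlam h F hF
  · exact JOrd.not_isBFSystem_of_lt hlam h _ hF.swap

/-- For an uncountable cardinal `λ`, the linear orders `J_α = (η·λ)·α` for distinct nonzero
ordinals `α ≠ β` are not `L_{∞,λ}`-equivalent. -/
theorem JOrd_not_L_infty_lam_equivalent (lam : Cardinal.{0}) (hlam : Cardinal.aleph0 < lam)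
    (α β : Ordinal.{0}) (hα : α ≠ 0) (hβ : β ≠ 0) (hne : α ≠ β) :
    ¬ ∃ F : Set (Set (JOrd lam α × JOrd lam β)), IsBFSystem (Cardinal.lift.{1, 0} lam) F :=
  JOrd_not_L_infty_lam_equivalent_general lam hlam α β hne
end

section
/- If I₀, I₁ are doubly transitive linear orders, all closed intervals [a,b] of I₀ are isomorphic to all closed intervals [c,d] of I₁, and a ∈ I₀, a' ∈ I₁ are points such that (a, ∞) in I₀ and (a', ∞) in I₁ both have cofinality ℵ₀, then (a, ∞) ≅ (a', ∞) as linear orders. -/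
open Set

section Aux

variable {A : Type*} {B : Type*} [LinearOrder A] [LinearOrder B]

/-- An order isomorphism of closed intervals sends the left endpoint to the left endpoint. -/
lemma iso_bot_aux {a b : A} {c d : B} (hab : a ≤ b) (hcd : c ≤ d)
    (e : Set.Icc a b ≃o Set.Icc c d) :
    (e ⟨a, le_refl a, hab⟩ : B) = c := by
  refine le_antisymm ?_ (e ⟨a, le_refl a, hab⟩).2.1
  have h1 : e ⟨a, le_refl a, hab⟩ ≤ ⟨c, le_refl c, hcd⟩ := by
    conv_rhs => rw [← e.apply_symm_apply ⟨c, le_refl c, hcd⟩]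
    exact e.monotone (Subtype.coe_le_coe.mp (e.symm ⟨c, le_refl c, hcd⟩).2.1)
  exact h1

/-- Restrict an iso of closed intervals to the half-open intervals. -/
noncomputable def iocIso {a b : A} {c d : B} (hab : a < b) (hcd : c < d)
    (e : Set.Icc a b ≃o Set.Icc c d) : Set.Ioc a b ≃o Set.Ioc c d where
  toFun x := ⟨(e ⟨x.1, x.2.1.le, x.2.2⟩ : B), by
      have h : (e ⟨a, le_refl a, hab.le⟩ : B) < e ⟨x.1, x.2.1.le, x.2.2⟩ :=
        Subtype.coe_lt_coe.mpr (e.strictMono (Subtype.mk_lt_mk.mpr x.2.1))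
      rwa [iso_bot_aux hab.le hcd.le e] at h,
    (e ⟨x.1, x.2.1.le, x.2.2⟩).2.2⟩
  invFun y := ⟨(e.symm ⟨y.1, y.2.1.le, y.2.2⟩ : A), by
      have h : (e.symm ⟨c, le_refl c, hcd.le⟩ : A) < e.symm ⟨y.1, y.2.1.le, y.2.2⟩ :=
        Subtype.coe_lt_coe.mpr (e.symm.strictMono (Subtype.mk_lt_mk.mpr y.2.1))
      rwa [iso_bot_aux hcd.le hab.le e.symm] at h,
    (e.symm ⟨y.1, y.2.1.le, y.2.2⟩).2.2⟩
  left_inv x := by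
    ext
    simp only
    rw [show (⟨(e ⟨x.1, x.2.1.le, x.2.2⟩ : B), (e ⟨x.1, x.2.1.le, x.2.2⟩).2.1,
        (e ⟨x.1, x.2.1.le, x.2.2⟩).2.2⟩ : Set.Icc c d) = e ⟨x.1, x.2.1.le, x.2.2⟩ from
      Subtype.ext rfl]
    rw [e.symm_apply_apply]
  right_inv y := by
    ext
    simp only
    rw [show (⟨(e.symm ⟨y.1, y.2.1.le, y.2.2⟩ : A), (e.symm ⟨y.1, y.2.1.le, y.2.2⟩).2.1,
        (e.symm ⟨y.1, y.2.1.le, y.2.2⟩).2.2⟩ : Set.Icc a b) = e.symm ⟨y.1, y.2.1.le, y.2.2⟩ from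
      Subtype.ext rfl]
    rw [e.apply_symm_apply]
  map_rel_iff' := by
    intro x y
    simp only [Equiv.coe_fn_mk, Subtype.mk_le_mk, Subtype.coe_le_coe]
    exact (Subtype.mk_le_mk.trans Subtype.coe_le_coe).trans
      (e.le_iff_le.trans (Subtype.mk_le_mk.trans Subtype.coe_le_coe))

/-- The point `x > u 0` lies in the piece indexed by the least `n` with `x ≤ u (n+1)`. -/
lemma mem_piece (u : ℕ → A) {x : A} (hx : u 0 < x) (h : ∃ n, x ≤ u (n + 1)) :
    x ∈ Set.Ioc (u (Nat.find h)) (u (Nat.find h + 1)) := by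
  refine ⟨?_, Nat.find_spec h⟩
  rcases Nat.eq_zero_or_pos (Nat.find h) with h0 | hpos
  · rw [h0]; exact hx
  · have := Nat.find_min h (m := Nat.find h - 1) (by omega)
    have heq : Nat.find h - 1 + 1 = Nat.find h := by omega
    rw [heq] at this
    exact lt_of_not_ge this

lemma idx_eq (u : ℕ → A) (hu : Monotone u) {x : A} (h : ∃ n, x ≤ u (n + 1)) (n : ℕ)
    (hx : x ∈ Set.Ioc (u n) (u (n + 1))) : Nat.find h = n := by
  refine le_antisymm (Nat.find_le hx.2) ?_
  by_contra hlt
  push_neg at hlt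
  have h1 : x ≤ u (Nat.find h + 1) := Nat.find_spec h
  have h2 : u (Nat.find h + 1) ≤ u n := hu (by omega)
  exact absurd (h1.trans h2) (not_le.mpr hx.1)

variable (u : ℕ → A) (v : ℕ → B)
  (φ : ∀ n, Set.Ioc (u n) (u (n + 1)) ≃o Set.Ioc (v n) (v (n + 1)))
  (hcof : ∀ x, u 0 < x → ∃ n, x ≤ u (n + 1))
  (hv : Monotone v)

/-- Glue the piecewise isomorphisms into a map on the final segments. -/
noncomputable def glueMap (x : Set.Ioi (u 0)) : Set.Ioi (v 0) :=
  ⟨(φ (Nat.find (hcof x.1 x.2)) ⟨x.1, mem_piece u x.2 (hcof x.1 x.2)⟩ : B), by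
    have h1 : v (Nat.find (hcof x.1 x.2)) <
        (φ (Nat.find (hcof x.1 x.2)) ⟨x.1, mem_piece u x.2 (hcof x.1 x.2)⟩ : B) :=
      (φ (Nat.find (hcof x.1 x.2)) ⟨x.1, mem_piece u x.2 (hcof x.1 x.2)⟩).2.1
    exact lt_of_le_of_lt (hv (Nat.zero_le _)) h1⟩

lemma glueMap_spec (hu : Monotone u) (x : Set.Ioi (u 0)) (n : ℕ)
    (hx : x.1 ∈ Set.Ioc (u n) (u (n + 1))) :
    (glueMap u v φ hcof hv x : B) = (φ n ⟨x.1, hx⟩ : B) := by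
  have hn : Nat.find (hcof x.1 x.2) = n := idx_eq u hu (hcof x.1 x.2) n hx
  subst hn
  rfl

lemma glueMap_mem (hu : Monotone u) (x : Set.Ioi (u 0)) (n : ℕ)
    (hx : x.1 ∈ Set.Ioc (u n) (u (n + 1))) :
    (glueMap u v φ hcof hv x : B) ∈ Set.Ioc (v n) (v (n + 1)) := by
  rw [glueMap_spec u v φ hcof hv hu x n hx]
  exact (φ n ⟨x.1, hx⟩).2

lemma glueMap_strictMono (hu : Monotone u) : StrictMono (glueMap u v φ hcof hv) := by
  have key : ∀ (x y : Set.Ioi (u 0)), x < y → ∀ m n, m ≤ n →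
      ∀ (hxm : x.1 ∈ Set.Ioc (u m) (u (m + 1))) (hyn : y.1 ∈ Set.Ioc (u n) (u (n + 1))),
      (φ m ⟨x.1, hxm⟩ : B) < (φ n ⟨y.1, hyn⟩ : B) := by
    intro x y hxy m n hmn hxm hyn
    rcases eq_or_lt_of_le hmn with rfl | hlt
    · exact Subtype.coe_lt_coe.mpr ((φ m).strictMono (Subtype.mk_lt_mk.mpr
        (Subtype.coe_lt_coe.mpr hxy)))
    · calc (φ m ⟨x.1, hxm⟩ : B) ≤ v (m + 1) := (φ m ⟨x.1, hxm⟩).2.2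
        _ ≤ v n := hv (by omega)
        _ < (φ n ⟨y.1, hyn⟩ : B) := (φ n ⟨y.1, hyn⟩).2.1
  intro x y hxy
  have hxm : x.1 ∈ Set.Ioc (u (Nat.find (hcof x.1 x.2))) (u (Nat.find (hcof x.1 x.2) + 1)) :=
    mem_piece u x.2 (hcof x.1 x.2)
  have hyn : y.1 ∈ Set.Ioc (u (Nat.find (hcof y.1 y.2))) (u (Nat.find (hcof y.1 y.2) + 1)) :=
    mem_piece u y.2 (hcof y.1 y.2)
  have hmn : Nat.find (hcof x.1 x.2) ≤ Nat.find (hcof y.1 y.2) := by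
    apply Nat.find_le
    exact le_of_lt (lt_of_lt_of_le (Subtype.coe_lt_coe.mpr hxy) hyn.2)
  rw [← Subtype.coe_lt_coe]
  rw [glueMap_spec u v φ hcof hv hu x _ hxm, glueMap_spec u v φ hcof hv hu y _ hyn]
  exact key x y hxy _ _ hmn hxm hyn

end Aux

/-- A linear order is doubly transitive: dense, without endpoints, and any two nondegenerate
closed intervals are order-isomorphic. -/
def DoublyTransitive (I : Type*) [LinearOrder I] : Prop :=
  DenselyOrdered I ∧ (∀ x : I, ∃ y, y < x) ∧ (∀ x : I, ∃ y, x < y) ∧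
    ∀ a b c d : I, a < b → c < d → Nonempty (Set.Icc a b ≃o Set.Icc c d)

/-- If `I₀, I₁` are doubly transitive linear orders all of whose closed intervals are
isomorphic to each other, and `a ∈ I₀`, `a' ∈ I₁` are such that `(a,∞)` and `(a',∞)` both
have cofinality `ℵ₀`, then `(a,∞) ≅ (a',∞)`. -/
theorem final_segments_iso_of_countable_cofinality
    (I₀ I₁ : Type*) [LinearOrder I₀] [LinearOrder I₁]
    (h₀ : DoublyTransitive I₀) (h₁ : DoublyTransitive I₁)
    (hloc : ∀ (a b : I₀) (c d : I₁), a < b → c < d →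
      Nonempty (Set.Icc a b ≃o Set.Icc c d))
    (a : I₀) (a' : I₁)
    (hcof : ∃ s : ℕ → I₀, StrictMono s ∧ (∀ n, a < s n) ∧ ∀ x, a < x → ∃ n, x ≤ s n)
    (hcof' : ∃ s : ℕ → I₁, StrictMono s ∧ (∀ n, a' < s n) ∧ ∀ x, a' < x → ∃ n, x ≤ s n) :
    Nonempty (Set.Ioi a ≃o Set.Ioi a') := by
  obtain ⟨s, hs, hsa, hsc⟩ := hcof
  obtain ⟨t, ht, hta, htc⟩ := hcof'
  -- extended sequences starting at a, a'
  set u : ℕ → I₀ := fun n => Nat.casesOn n a s with hu_def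
  set v : ℕ → I₁ := fun n => Nat.casesOn n a' t with hv_def
  have hu0 : u 0 = a := rfl
  have hv0 : v 0 = a' := rfl
  have hu : StrictMono u := by
    apply strictMono_nat_of_lt_succ
    intro n
    cases n with
    | zero => exact hsa 0
    | succ k => exact hs (Nat.lt_succ_self k)
  have hv : StrictMono v := by
    apply strictMono_nat_of_lt_succ
    intro n
    cases n with
    | zero => exact hta 0
    | succ k => exact ht (Nat.lt_succ_self k)
  have hulist : ∀ n, u n < u (n + 1) := fun n => hu (Nat.lt_succ_self n)
  have hvlist : ∀ n, v n < v (n + 1) := fun n => hv (Nat.lt_succ_self n)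
  -- piecewise isomorphisms
  have φ : ∀ n, Set.Ioc (u n) (u (n + 1)) ≃o Set.Ioc (v n) (v (n + 1)) := fun n =>
    iocIso (hulist n) (hvlist n)
      (Classical.choice (hloc (u n) (u (n + 1)) (v n) (v (n + 1)) (hulist n) (hvlist n)))
  have hcofu : ∀ x, u 0 < x → ∃ n, x ≤ u (n + 1) := fun x hx => hsc x hx
  have hcofv : ∀ x, v 0 < x → ∃ n, x ≤ v (n + 1) := fun x hx => htc x hx
  set ψ : ∀ n, Set.Ioc (v n) (v (n + 1)) ≃o Set.Ioc (u n) (u (n + 1)) :=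
    fun n => (φ n).symm with hψ
  set f := glueMap u v φ hcofu hv.monotone with hf
  set g := glueMap v u ψ hcofv hu.monotone with hg
  have hfg : ∀ y, f (g y) = y := by
    intro y
    set n := Nat.find (hcofv y.1 y.2) with hn
    have hyn : y.1 ∈ Set.Ioc (v n) (v (n + 1)) := mem_piece v y.2 (hcofv y.1 y.2)
    have hgy : (g y : I₀) = (ψ n ⟨y.1, hyn⟩ : I₀) :=
      glueMap_spec v u ψ hcofv hu.monotone hv.monotone y n hyn
    have hgymem : (g y : I₀) ∈ Set.Ioc (u n) (u (n + 1)) :=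
      glueMap_mem v u ψ hcofv hu.monotone hv.monotone y n hyn
    have := glueMap_spec u v φ hcofu hv.monotone hu.monotone (g y) n hgymem
    apply Subtype.ext
    rw [hf]
    rw [this]
    have hsub : (⟨(g y : I₀), hgymem⟩ : Set.Ioc (u n) (u (n + 1))) = ψ n ⟨y.1, hyn⟩ :=
      Subtype.ext hgy
    rw [hsub, hψ]
    simp
  have hsurj : Function.Surjective f := fun y => ⟨g y, hfg y⟩
  have hmono : StrictMono f := glueMap_strictMono u v φ hcofu hv.monotone hu.monotone
  -- transport along Ioi a = Ioi (u 0)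
  have e1 : Set.Ioi a ≃o Set.Ioi (u 0) := by rw [hu0]
  have e2 : Set.Ioi (v 0) ≃o Set.Ioi a' := by rw [hv0]
  exact ⟨e1.trans ((hmono.orderIsoOfSurjective f hsurj).trans e2)⟩
end

section
/- If M and N are L_{∞,λ}-equivalent structures (there is a back-and-forth system contained in ℱ_λ(M,N)), then every member of the back-and-forth system has Rank ≥ α for every ordinal α; in particular KC_λ(M) = KC_λ(N), where KC_λ(M) is the least ordinal α such that for all f ∈ ℱ_λ(M,M), Rank(f) ≥ α implies Rank(f) ≥ α+1. -/
open FirstOrder Cardinal Set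

universe u

/-- `G` is the graph of a partial elementary map from `M` to `N`. -/
def IsPartialElem (L : FirstOrder.Language) (M N : Type u) [L.Structure M] [L.Structure N]
    (G : Set (M × N)) : Prop :=
  ∀ (n : ℕ) (φ : L.Formula (Fin n)) (v : Fin n → M × N),
    (∀ i, v i ∈ G) → (φ.Realize (fun i => (v i).1) ↔ φ.Realize (fun i => (v i).2))

/-- `G` belongs to `ℱ_λ(M,N)`: a partial elementary map of domain size `< λ`. -/
def InF (L : FirstOrder.Language) (M N : Type u) [L.Structure M] [L.Structure N]
    (lam : Cardinal.{u}) (G : Set (M × N)) : Prop :=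
  IsPartialElem L M N G ∧ Cardinal.mk G < lam

/-- `RankGe L M N lam α G` means `Rank(G) ≥ α` in the sense of Karp complexity: `Rank(f) ≥ 0`
always, `Rank(f) ≥ α` for limit `α` iff `Rank(f) ≥ β` for all `β < α`, and `Rank(f) ≥ β + 1`
iff every subset of size `< λ` of either side can be absorbed into an extension of `f` in
`ℱ_λ(M,N)` of rank `≥ β`. -/
noncomputable def RankGe (L : FirstOrder.Language) (M N : Type u)
    [L.Structure M] [L.Structure N] (lam : Cardinal.{u}) :
    Ordinal → Set (M × N) → Prop :=
  Ordinal.lt_wf.fix fun α IH G =>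
    ∀ β (h : β < α),
      (∀ C : Set M, Cardinal.mk C < lam →
        ∃ G', InF L M N lam G' ∧ G ⊆ G' ∧ C ⊆ Prod.fst '' G' ∧ IH β h G') ∧
      (∀ C : Set N, Cardinal.mk C < lam →
        ∃ G', InF L M N lam G' ∧ G ⊆ G' ∧ C ⊆ Prod.snd '' G' ∧ IH β h G')

/-- The least ordinal `α` such that `Rank(f) ≥ α` implies `Rank(f) ≥ α + 1` for every
`f ∈ ℱ_λ(M,M)`: the `λ`-Karp complexity of `M`. -/
noncomputable def KC (L : FirstOrder.Language) (M : Type u) [L.Structure M]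
    (lam : Cardinal.{u}) : Ordinal :=
  sInf {α | ∀ G : Set (M × M), InF L M M lam G →
    RankGe L M M lam α G → RankGe L M M lam (α + 1) G}

/-- A back-and-forth system contained in `ℱ_λ(M,N)`, witnessing `L_{∞,λ}`-equivalence. -/
def IsBFSys (L : FirstOrder.Language) (M N : Type u) [L.Structure M] [L.Structure N]
    (lam : Cardinal.{u}) (F : Set (Set (M × N))) : Prop :=
  F.Nonempty ∧ (∀ G ∈ F, InF L M N lam G) ∧
    (∀ G ∈ F, ∀ C : Set M, Cardinal.mk C < lam →
      ∃ G' ∈ F, G ⊆ G' ∧ C ⊆ Prod.fst '' G') ∧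
    (∀ G ∈ F, ∀ C : Set N, Cardinal.mk C < lam →
      ∃ G' ∈ F, G ⊆ G' ∧ C ⊆ Prod.snd '' G')

/-! Rank is preserved under inverses and under composition of partial elementary maps: to absorb a
small set into the domain of `G ○ G'`, first extend `G`, then extend `G'` over the range of that
extension. Members of a back-and-forth system have every rank, by induction on the rank. For the
Karp complexities, conjugate `H ∈ ℱ_λ(N,N)` by members `G₁, G₂` of the system whose ranges cover
the domain and the range of `H`: `G₁ ○ H ○ G₂⁻¹ ∈ ℱ_λ(M,M)` has the rank of `H`, and conjugating it
back gives an extension of `H`. So every `α` at which the rank hierarchy of `ℱ_λ(M,M)` stabilises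
is one for `ℱ_λ(N,N)`, and conversely by symmetry. -/

open SetRel

lemma SetRel.mk_comp_le {α β γ : Type u} (R : SetRel α β) {S : SetRel β γ}
    (hS : Relator.RightUnique (· ~[S] ·)) : #(R ○ S) ≤ #R := by
  choose b hRb hbS using fun p : R ○ S => (p.2 : ∃ b, p.1.1 ~[R] b ∧ b ~[S] p.1.2)
  refine Cardinal.mk_le_of_injective (f := fun p => ⟨(p.1.1, b p), hRb p⟩) fun p q hpq => ?_
  simp only [Subtype.mk.injEq, Prod.mk.injEq] at hpq
  have h₂ : p.1.2 = q.1.2 := hS (hbS p) (hpq.2 ▸ hbS q)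
  exact Subtype.ext (Prod.ext hpq.1 h₂)

lemma SetRel.mk_inv {α β : Type u} (R : SetRel α β) : #R.inv = #R := by
  rw [SetRel.inv, ← Set.image_swap_eq_preimage_swap, Cardinal.mk_image_eq Prod.swap_injective]

lemma SetRel.image_fst_inv {α β : Type u} (R : SetRel α β) :
    Prod.fst '' R.inv = Prod.snd '' R := by
  rw [SetRel.inv, ← Set.image_swap_eq_preimage_swap, Set.image_image]; rfl

lemma SetRel.image_snd_inv {α β : Type u} (R : SetRel α β) :
    Prod.snd '' R.inv = Prod.fst '' R := by
  rw [SetRel.inv, ← Set.image_swap_eq_preimage_swap, Set.image_image]; rfl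

lemma SetRel.subset_inv_comp_comp {α β γ δ : Type u} (H : SetRel γ δ) {G₁ : SetRel α γ}
    {G₂ : SetRel β δ} (h₁ : Prod.fst '' H ⊆ Prod.snd '' G₁) (h₂ : Prod.snd '' H ⊆ Prod.snd '' G₂) :
    H ⊆ G₁.inv ○ (G₁ ○ H ○ G₂.inv) ○ G₂ := by
  rintro ⟨b, b'⟩ hH
  obtain ⟨⟨a, _⟩, ha, rfl⟩ := h₁ ⟨_, hH, rfl⟩
  obtain ⟨⟨a', _⟩, ha', rfl⟩ := h₂ ⟨_, hH, rfl⟩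
  exact ⟨a', ⟨a, ha, _, ⟨_, ha, hH⟩, ha'⟩, ha'⟩

section Rank

variable {L : FirstOrder.Language} {M N P : Type u}
  [L.Structure M] [L.Structure N] [L.Structure P] {lam : Cardinal.{u}}

namespace IsPartialElem

variable {G : SetRel M N} {G' : SetRel N P}

lemma rightUnique (hG : IsPartialElem L M N G) : Relator.RightUnique (· ~[G] ·) := by
  intro a b b' hb hb'
  have h := hG 2 ((Language.Term.var 0).equal (Language.Term.var 1)) ![(a, b), (a, b')]
    (by simp [Fin.forall_fin_two, hb, hb'])
  simpa using h

lemma inv (hG : IsPartialElem L M N G) : IsPartialElem L N M G.inv :=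
  fun n φ v hv => (hG n φ (Prod.swap ∘ v) hv).symm

lemma comp (hG : IsPartialElem L M N G) (hG' : IsPartialElem L N P G') :
    IsPartialElem L M P (G ○ G') := by
  intro n φ v hv
  choose b hb hb' using hv
  exact (hG n φ (fun i => ((v i).1, b i)) hb).trans (hG' n φ (fun i => (b i, (v i).2)) hb')

end IsPartialElem

namespace InF

variable {G : SetRel M N} {G' : SetRel N P}

lemma inv (hG : InF L M N lam G) : InF L N M lam G.inv :=
  ⟨hG.1.inv, G.mk_inv ▸ hG.2⟩

lemma comp (hG : InF L M N lam G) (hG' : IsPartialElem L N P G') : InF L M P lam (G ○ G') :=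
  ⟨hG.1.comp hG', (G.mk_comp_le hG'.rightUnique).trans_lt hG.2⟩

lemma mk_image_fst_lt (hG : InF L M N lam G) : #(Prod.fst '' G) < lam :=
  Cardinal.mk_image_le.trans_lt hG.2

lemma mk_image_snd_lt (hG : InF L M N lam G) : #(Prod.snd '' G) < lam :=
  Cardinal.mk_image_le.trans_lt hG.2

end InF

lemma rankGe_iff {α : Ordinal} {G : SetRel M N} :
    RankGe L M N lam α G ↔ ∀ β < α,
      (∀ C : Set M, #C < lam →
        ∃ G' : SetRel M N, InF L M N lam G' ∧ G ⊆ G' ∧ C ⊆ Prod.fst '' G' ∧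
          RankGe L M N lam β G') ∧
      (∀ C : Set N, #C < lam →
        ∃ G' : SetRel M N, InF L M N lam G' ∧ G ⊆ G' ∧ C ⊆ Prod.snd '' G' ∧
          RankGe L M N lam β G') := by
  unfold RankGe
  rw [WellFounded.fix_eq]

lemma RankGe.of_subset {α : Ordinal} {G G' : SetRel M N} (h : RankGe L M N lam α G')
    (hGG' : G ⊆ G') : RankGe L M N lam α G := by
  rw [rankGe_iff] at h ⊢
  refine fun β hβ => ⟨fun C hC => ?_, fun C hC => ?_⟩
  · obtain ⟨G'', hG'', hsub, hC', hrank⟩ := (h β hβ).1 C hC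
    exact ⟨G'', hG'', hGG'.trans hsub, hC', hrank⟩
  · obtain ⟨G'', hG'', hsub, hC', hrank⟩ := (h β hβ).2 C hC
    exact ⟨G'', hG'', hGG'.trans hsub, hC', hrank⟩

lemma RankGe.inv {α : Ordinal} {G : SetRel M N} (h : RankGe L M N lam α G) :
    RankGe L N M lam α G.inv := by
  induction α using WellFoundedLT.induction generalizing G with | _ α IH =>
  rw [rankGe_iff] at h ⊢
  refine fun β hβ => ⟨fun C hC => ?_, fun C hC => ?_⟩
  · obtain ⟨G', hG', hsub, hC', hrank⟩ := (h β hβ).2 C hC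
    exact ⟨G'.inv, hG'.inv, inv_mono hsub, G'.image_fst_inv ▸ hC', IH β hβ hrank⟩
  · obtain ⟨G', hG', hsub, hC', hrank⟩ := (h β hβ).1 C hC
    exact ⟨G'.inv, hG'.inv, inv_mono hsub, G'.image_snd_inv ▸ hC', IH β hβ hrank⟩

def ForthAt (L : FirstOrder.Language) (M N : Type u) [L.Structure M] [L.Structure N]
    (lam : Cardinal.{u}) (β : Ordinal) (G : SetRel M N) : Prop :=
  ∀ C : Set M, #C < lam →
    ∃ G' : SetRel M N, InF L M N lam G' ∧ G ⊆ G' ∧ C ⊆ Prod.fst '' G' ∧ RankGe L M N lam β G'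

lemma rankGe_iff_forthAt {α : Ordinal} {G : SetRel M N} :
    RankGe L M N lam α G ↔ ∀ β < α, ForthAt L M N lam β G ∧ ForthAt L N M lam β G.inv := by
  rw [rankGe_iff]
  refine forall₂_congr fun β _ => and_congr_right' ⟨fun h C hC => ?_, fun h C hC => ?_⟩
  · obtain ⟨G', hG', hsub, hC', hrank⟩ := h C hC
    exact ⟨G'.inv, hG'.inv, inv_mono hsub, G'.image_fst_inv ▸ hC', hrank.inv⟩
  · obtain ⟨G', hG', hsub, hC', hrank⟩ := h C hC
    exact ⟨G'.inv, hG'.inv, inv_mono hsub, G'.image_snd_inv ▸ hC', hrank.inv⟩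

lemma ForthAt.comp {β : Ordinal} {G : SetRel M N} {G' : SetRel N P}
    (hcomp : ∀ (R : SetRel M N) (S : SetRel N P), RankGe L M N lam β R → RankGe L N P lam β S →
      RankGe L M P lam β (R ○ S))
    (h : ForthAt L M N lam β G) (h' : ForthAt L N P lam β G') :
    ForthAt L M P lam β (G ○ G') := by
  intro C hC
  obtain ⟨G₁, hG₁, hGG₁, hCG₁, hrank₁⟩ := h C hC
  obtain ⟨G₂, hG₂, hGG₂, hG₁G₂, hrank₂⟩ := h' _ hG₁.mk_image_snd_lt
  refine ⟨G₁ ○ G₂, hG₁.comp hG₂.1, comp_subset_comp hGG₁ hGG₂, fun a ha => ?_,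
    hcomp _ _ hrank₁ hrank₂⟩
  obtain ⟨⟨_, b⟩, hab, rfl⟩ := hCG₁ ha
  obtain ⟨⟨_, c⟩, hbc, rfl⟩ := hG₁G₂ ⟨_, hab, rfl⟩
  exact ⟨_, prodMk_mem_comp hab hbc, rfl⟩

lemma RankGe.comp {α : Ordinal} {G : SetRel M N} {G' : SetRel N P}
    (h : RankGe L M N lam α G) (h' : RankGe L N P lam α G') : RankGe L M P lam α (G ○ G') := by
  induction α using WellFoundedLT.induction generalizing M N P with | _ α IH =>
  rw [rankGe_iff_forthAt] at h h' ⊢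
  intro β hβ
  obtain ⟨hforth, hback⟩ := h β hβ
  obtain ⟨hforth', hback'⟩ := h' β hβ
  exact ⟨hforth.comp (fun _ _ => IH β hβ) hforth',
    inv_comp G G' ▸ hback'.comp (fun _ _ => IH β hβ) hback⟩

namespace IsBFSys

variable {F : Set (SetRel M N)}

lemma rankGe (hF : IsBFSys L M N lam F) {G : SetRel M N} (hG : G ∈ F) (α : Ordinal) :
    RankGe L M N lam α G := by
  obtain ⟨-, hinF, hforth, hback⟩ := hF
  induction α using WellFoundedLT.induction generalizing G with | _ α IH =>
  rw [rankGe_iff]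
  refine fun β hβ => ⟨fun C hC => ?_, fun C hC => ?_⟩
  · obtain ⟨G', hG', hsub, hC'⟩ := hforth G hG C hC
    exact ⟨G', hinF G' hG', hsub, hC', IH β hβ hG'⟩
  · obtain ⟨G', hG', hsub, hC'⟩ := hback G hG C hC
    exact ⟨G', hinF G' hG', hsub, hC', IH β hβ hG'⟩

lemma inv (hF : IsBFSys L M N lam F) : IsBFSys L N M lam (SetRel.inv '' F) := by
  obtain ⟨hne, hinF, hforth, hback⟩ := hF
  refine ⟨hne.image _, ?_, ?_, ?_⟩
  · rintro _ ⟨G, hG, rfl⟩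
    exact (hinF G hG).inv
  · rintro _ ⟨G, hG, rfl⟩ C hC
    obtain ⟨(G' : SetRel M N), hG', hsub, hC'⟩ := hback G hG C hC
    exact ⟨G'.inv, mem_image_of_mem _ hG', inv_mono hsub, G'.image_fst_inv ▸ hC'⟩
  · rintro _ ⟨G, hG, rfl⟩ C hC
    obtain ⟨(G' : SetRel M N), hG', hsub, hC'⟩ := hforth G hG C hC
    exact ⟨G'.inv, mem_image_of_mem _ hG', inv_mono hsub, G'.image_snd_inv ▸ hC'⟩

end IsBFSys

def RankStableAt (L : FirstOrder.Language) (M : Type u) [L.Structure M] (lam : Cardinal.{u})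
    (α : Ordinal) : Prop :=
  ∀ G : Set (M × M), InF L M M lam G → RankGe L M M lam α G → RankGe L M M lam (α + 1) G

lemma KC_eq_sInf_rankStableAt : KC L M lam = sInf {α | RankStableAt L M lam α} := rfl

lemma IsBFSys.rankStableAt {F : Set (SetRel M N)} (hF : IsBFSys L M N lam F) {α : Ordinal}
    (hα : RankStableAt L M lam α) : RankStableAt L N lam α := by
  intro (H : SetRel N N) hH hrank
  obtain ⟨⟨G₀, hG₀⟩, hinF, -, hback⟩ := id hF
  obtain ⟨G₁, hG₁, -, hHG₁⟩ := hback G₀ hG₀ _ hH.mk_image_fst_lt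
  obtain ⟨(G₂ : SetRel M N), hG₂, -, hHG₂⟩ := hback G₀ hG₀ _ hH.mk_image_snd_lt
  have hconj : InF L M M lam (G₁ ○ H ○ G₂.inv) :=
    ((hinF G₁ hG₁).comp hH.1).comp (hinF G₂ hG₂).1.inv
  have hconjRank : RankGe L M M lam (α + 1) (G₁ ○ H ○ G₂.inv) :=
    hα _ hconj (((hF.rankGe hG₁ α).comp hrank).comp (hF.rankGe hG₂ α).inv)
  exact (((hF.rankGe hG₁ (α + 1)).inv.comp hconjRank).comp (hF.rankGe hG₂ (α + 1))).of_subset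
    (H.subset_inv_comp_comp hHG₁ hHG₂)

end Rank

theorem bf_system_rank_and_KC_general (L : FirstOrder.Language) (M N : Type u)
    [L.Structure M] [L.Structure N] (lam : Cardinal.{u})
    (F : Set (Set (M × N))) (hF : IsBFSys L M N lam F) :
    (∀ G ∈ F, ∀ α : Ordinal, RankGe L M N lam α G) ∧
    KC L M lam = KC L N lam := by
  refine ⟨fun G hG α => hF.rankGe hG α, ?_⟩
  rw [KC_eq_sInf_rankStableAt, KC_eq_sInf_rankStableAt]
  congr 1
  ext α
  exact ⟨hF.rankStableAt, hF.inv.rankStableAt⟩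

/-- If `M` and `N` are `L_{∞,λ}`-equivalent (there is a back-and-forth system inside
`ℱ_λ(M,N)`), then every member of the system has Rank `≥ α` for every ordinal `α`; in
particular `KC_λ(M) = KC_λ(N)`. -/
theorem bf_system_rank_and_KC (L : FirstOrder.Language) (M N : Type u)
    [L.Structure M] [L.Structure N] (lam : Cardinal.{u}) (hlam : Cardinal.aleph0 ≤ lam)
    (F : Set (Set (M × N))) (hF : IsBFSys L M N lam F) :
    (∀ G ∈ F, ∀ α : Ordinal, RankGe L M N lam α G) ∧
    KC L M lam = KC L N lam :=
  bf_system_rank_and_KC_general L M N lam F hF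
end

section
/- Suppose c : [μ]² → ω witnesses Pr₀(μ,μ,ℵ₀,ℵ₀). Then for every k, n ∈ ω, every family {x_α : α < μ} of μ pairwise disjoint n-element subsets of μ, and every family of colorings {f_{i,j} : n × n → ω : i < j < k}, there exist β₀ < β₁ < ⋯ < β_{k−1} < μ such that c(x_{β_i}^m, x_{β_j}^{m'}) = f_{i,j}(m, m') for all i < j < k and all m, m' < n, where x^m denotes the m-th element of x in increasing order. -/
open Cardinal

/-- The coloring principle `Pr₀(μ,μ,ℵ₀,ℵ₀)`: `c` is symmetric and for every `n`, every family
of `μ` pairwise disjoint `n`-element subsets of `μ` (presented by their increasing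
enumerations) and every `f : n × n → ω`, there are `α < β` realizing `f` between the `α`-th
and `β`-th sets. -/
def Pr0 (μ : Cardinal.{0}) (c : Ordinal → Ordinal → ℕ) : Prop :=
  (∀ a b, c a b = c b a) ∧
  ∀ (n : ℕ) (x : Ordinal → Fin n → Ordinal),
    (∀ α, α < μ.ord → StrictMono (x α) ∧ ∀ m, x α m < μ.ord) →
    (∀ α β, α < μ.ord → β < μ.ord → α ≠ β → ∀ m m', x α m ≠ x β m') →
    ∀ f : Fin n → Fin n → ℕ,
      ∃ α β, α < β ∧ β < μ.ord ∧ ∀ m m', c (x α m) (x β m') = f m m'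

/-!
Induction on `k`, proving more generally that the tuple can be found inside any subset `S` of
`μ` of size `μ`. Split `S` into `μ` disjoint pieces of size `μ`. In the `ι`-th piece the induction
hypothesis gives a `k`-tuple `u ι` realizing the colorings among the first `k` entries; add a point
`d ι` of the piece above it. Each `x`-image of the tuple `(u ι, d ι)` is a finite set, and after a
pigeonhole step fixing how its increasing enumeration is labeled, `Pr₀` applied to these sets,
indexed by `d ι`, yields `d ι < d ι'` such that `(u ι, d ι')` realizes all colorings.
-/

open Set

def IsLarge (μ : Cardinal.{0}) (S : Set Ordinal.{0}) : Prop :=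
  S ⊆ Iio μ.ord ∧ lift.{1} μ ≤ #S

theorem isLarge_Iio_ord (μ : Cardinal.{0}) : IsLarge μ (Iio μ.ord) :=
  ⟨subset_rfl, by rw [mk_Iio_ordinal, card_ord]⟩

namespace IsLarge

variable {μ : Cardinal.{0}} {S : Set Ordinal.{0}}

theorem exists_strictMono (hS : IsLarge μ S) :
    ∃ e : Ordinal → Ordinal, StrictMono e ∧ ∀ ζ < μ.ord, e ζ ∈ S := by
  have hunb : ¬BddAbove (S ∪ Ici μ.ord) := fun h =>
    not_bddAbove_Ici _ (h.mono subset_union_right)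
  refine ⟨Ordinal.enumOrd _, Ordinal.enumOrd_strictMono hunb, fun ζ hζ => ?_⟩
  refine (Ordinal.enumOrd_mem hunb ζ).resolve_right fun hge => ?_
  -- otherwise all of `S` is enumerated before `ζ`, so `#S ≤ ζ.card < μ`
  have hsub : S ⊆ Ordinal.enumOrd (S ∪ Ici μ.ord) '' Iio ζ := by
    intro a ha
    obtain ⟨ξ, rfl⟩ := Ordinal.enumOrd_surjective hunb (Or.inl ha)
    exact ⟨ξ, (Ordinal.enumOrd_lt_enumOrd hunb).1 ((hS.1 ha).trans_le hge), rfl⟩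
  have := hS.2.trans ((mk_le_mk_of_subset hsub).trans mk_image_le)
  rw [mk_Iio_ordinal, lift_le] at this
  exact (lt_ord.1 hζ).not_ge this

theorem exists_forall_gt (hμ : ℵ₀ ≤ μ) (hS : IsLarge μ S) {ι : Type*} [Fintype ι]
    (u : ι → Ordinal) (hu : ∀ i, u i < μ.ord) : ∃ δ ∈ S, ∀ i, u i < δ := by
  obtain ⟨e, he, heS⟩ := hS.exists_strictMono
  have hsup : Finset.univ.sup u < μ.ord :=
    (Finset.sup_lt_iff (ord_pos.2 (aleph0_pos.trans_le hμ))).2 fun i _ => hu i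
  exact ⟨e (Order.succ (Finset.univ.sup u)), heS _ ((isSuccLimit_ord hμ).succ_lt hsup),
    fun i => (Order.lt_succ_of_le (Finset.le_sup (Finset.mem_univ i))).trans_le he.le_apply⟩

theorem exists_fiber (hμ : ℵ₀ ≤ μ) (hS : IsLarge μ S) {B : Type} [Finite B]
    (g : Ordinal → B) : ∃ b, IsLarge μ {a ∈ S | g a = b} := by
  have hμ' : ℵ₀ ≤ lift.{1} μ := aleph0_le_lift.2 hμ
  have hcof : #(ULift.{1} B) < (lift.{1} μ).ord.cof :=
    (lt_aleph0_of_finite _).trans_le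
      (Ordinal.aleph0_le_cof_iff.2 (Ordinal.one_lt_cof_iff.2 (isSuccLimit_ord hμ')))
  obtain ⟨⟨b⟩, t, htS, ht, htb⟩ :=
    infinite_pigeonhole_set (s := S) (fun a => ULift.up (g a)) _ hS.2 hμ' hcof
  exact ⟨b, fun a ha => hS.1 ha.1,
    ht.trans (mk_le_mk_of_subset fun a ha => ⟨htS ha, congrArg ULift.down (htb ha)⟩)⟩

theorem exists_partition (hμ : ℵ₀ ≤ μ) (hS : IsLarge μ S) :
    ∃ p : Ordinal → Ordinal, ∀ ι < μ.ord, IsLarge μ {a ∈ S | p a = ι} := by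
  classical
  have hS' : #S = lift.{1} μ := le_antisymm
    ((mk_le_mk_of_subset hS.1).trans_eq (by rw [mk_Iio_ordinal, card_ord])) hS.2
  obtain ⟨P⟩ : Nonempty (S ≃ Iio μ.ord × S) := Cardinal.eq.1 <| by
    rw [mk_prod, lift_id, lift_id, hS', mk_Iio_ordinal, card_ord,
      mul_eq_self (aleph0_le_lift.2 hμ)]
  refine ⟨fun a => if h : a ∈ S then (P ⟨a, h⟩).1 else 0, fun ι hι =>
    ⟨fun a ha => hS.1 ha.1, hS.2.trans (mk_le_of_injective (β := {a ∈ S | _})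
      (f := fun y => ⟨P.symm (⟨ι, hι⟩, y), (P.symm _).2, by simp⟩) fun y y' h => ?_)⟩⟩
  simpa using congrArg (fun a : {a ∈ S | _} => (P ⟨a, a.2.1⟩).2) h

theorem image_Iio_ord {d : Ordinal → Ordinal} (hd : InjOn d (Iio μ.ord))
    (hdS : MapsTo d (Iio μ.ord) (Iio μ.ord)) : IsLarge μ (d '' Iio μ.ord) :=
  ⟨hdS.image_subset, (mk_image_eq_of_injOn _ _ hd).ge.trans' (isLarge_Iio_ord μ).2⟩

end IsLarge

theorem exists_equiv_strictMono_comp {T α : Type*} [Fintype T] [LinearOrder α] {g : T → α}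
    (hg : Function.Injective g) : ∃ σ : Fin (Fintype.card T) ≃ T, StrictMono (g ∘ σ) := by
  set e := (Fintype.equivFin T).symm
  exact ⟨(Tuple.sort (g ∘ e)).trans e, (Tuple.monotone_sort (g ∘ e)).strictMono_of_injective
    (hg.comp (e.injective.comp (Tuple.sort _).injective))⟩

theorem Fin.strictMono_snoc_of_lt {α : Type*} [Preorder α] {k : ℕ} {u : Fin k → α} {d : α}
    (hu : StrictMono u) (hd : ∀ i, u i < d) : StrictMono (Fin.snoc u d : Fin (k + 1) → α) := by
  intro i j hij
  induction j using Fin.lastCases with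
  | last =>
    induction i using Fin.lastCases with
    | last => exact absurd hij (lt_irrefl _)
    | cast i => simpa using hd i
  | cast j =>
    induction i using Fin.lastCases with
    | last => exact absurd hij (Fin.castSucc_lt_last j).not_gt
    | cast i => simpa using hu (Fin.castSucc_lt_castSucc_iff.1 hij)

def Realizes {k n : ℕ} (c : Ordinal → Ordinal → ℕ) (x : Ordinal → Fin n → Ordinal)
    (f : Fin k → Fin k → Fin n → Fin n → ℕ) (β : Fin k → Ordinal) : Prop :=
  ∀ i j, i < j → ∀ m m', c (x (β i) m) (x (β j) m') = f i j m m'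

theorem Realizes.snoc {k n : ℕ} {c : Ordinal → Ordinal → ℕ} {x : Ordinal → Fin n → Ordinal}
    {f : Fin (k + 1) → Fin (k + 1) → Fin n → Fin n → ℕ} {u : Fin k → Ordinal} {d : Ordinal}
    (hu : Realizes c x (fun i j => f i.castSucc j.castSucc) u)
    (hd : ∀ i m m', c (x (u i) m) (x d m') = f i.castSucc (Fin.last k) m m') :
    Realizes c x f (Fin.snoc u d) := by
  intro i j hij
  induction j using Fin.lastCases with
  | last =>
    induction i using Fin.lastCases with
    | last => exact absurd hij (lt_irrefl _)
    | cast i => simpa using hd i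
  | cast j =>
    induction i using Fin.lastCases with
    | last => exact absurd hij (Fin.castSucc_lt_last j).not_gt
    | cast i => simpa using hu i j (Fin.castSucc_lt_castSucc_iff.1 hij)

namespace Pr0

variable {μ : Cardinal.{0}} {c : Ordinal → Ordinal → ℕ}

theorem aleph0_le (hc : Pr0 μ c) : ℵ₀ ≤ μ := by
  by_contra! hμ
  have hfin : (Iio μ.ord).Finite := by
    rw [← lt_aleph0_iff_set_finite, mk_Iio_ordinal, card_ord]
    exact lift_lt_aleph0.2 hμ
  obtain ⟨N, hN⟩ := ((hfin.prod hfin).image fun p => c p.1 p.2).bddAbove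
  obtain ⟨α, β, hαβ, hβ, hcol⟩ := hc.2 1 (fun α _ => α)
    (fun α hα => ⟨Subsingleton.strictMono _, fun _ => hα⟩) (fun _ _ _ _ h _ _ => h)
    fun _ _ => N + 1
  have := hN ⟨(α, β), ⟨hαβ.trans hβ, hβ⟩, hcol 0 0⟩
  omega

theorem exists_lt_of_isLarge (hc : Pr0 μ c) {S : Set Ordinal} (hS : IsLarge μ S) {n : ℕ}
    (x : Ordinal → Fin n → Ordinal) (hx : ∀ α ∈ S, StrictMono (x α) ∧ ∀ m, x α m < μ.ord)
    (hdisj : ∀ α ∈ S, ∀ β ∈ S, α ≠ β → ∀ m m', x α m ≠ x β m') (f : Fin n → Fin n → ℕ) :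
    ∃ α ∈ S, ∃ β ∈ S, α < β ∧ ∀ m m', c (x α m) (x β m') = f m m' := by
  obtain ⟨e, he, heS⟩ := hS.exists_strictMono
  obtain ⟨α, β, hαβ, hβ, hcol⟩ := hc.2 n (fun ζ => x (e ζ)) (fun ζ hζ => hx _ (heS ζ hζ))
    (fun ζ ξ hζ hξ hne => hdisj _ (heS ζ hζ) _ (heS ξ hξ) (he.injective.ne hne)) f
  exact ⟨e α, heS α (hαβ.trans hβ), e β, heS β hβ, he hαβ, hcol⟩

theorem exists_lt_of_injective (hc : Pr0 μ c) {S : Set Ordinal} (hS : IsLarge μ S)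
    {T : Type} [Fintype T] (y : Ordinal → T → Ordinal) (hy : ∀ α ∈ S, ∀ t, y α t < μ.ord)
    (hinj : ∀ α ∈ S, ∀ β ∈ S, ∀ t t', y α t = y β t' → α = β ∧ t = t')
    (f : T → T → ℕ) : ∃ α ∈ S, ∃ β ∈ S, α < β ∧ ∀ t t', c (y α t) (y β t') = f t t' := by
  classical
  have hsort : ∀ α, ∃ σ : Fin (Fintype.card T) ≃ T, α ∈ S → StrictMono (y α ∘ σ) := fun α =>
    if hα : α ∈ S then
      (exists_equiv_strictMono_comp fun t t' h => (hinj α hα α hα t t' h).2).imp fun _ h _ => h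
    else ⟨(Fintype.equivFin T).symm, fun h => absurd h hα⟩
  choose σ hσ using hsort
  obtain ⟨σ₀, hσ₀⟩ := hS.exists_fiber hc.aleph0_le σ
  obtain ⟨α, ⟨hαS, -⟩, β, ⟨hβS, -⟩, hαβ, hcol⟩ := hc.exists_lt_of_isLarge hσ₀
    (fun α => y α ∘ σ₀) (fun α ⟨hαS, hασ⟩ => ⟨hασ ▸ hσ α hαS, fun _ => hy α hαS _⟩)
    (fun α ⟨hα, _⟩ β ⟨hβ, _⟩ hne _ _ h => hne (hinj α hα β hβ _ _ h).1)
    fun s s' => f (σ₀ s) (σ₀ s')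
  refine ⟨α, hαS, β, hβS, hαβ, fun t t' => ?_⟩
  simpa using hcol (σ₀.symm t) (σ₀.symm t')

section Tuples

variable {n : ℕ} {x : Ordinal → Fin n → Ordinal}

theorem eq_and_eq_of_apply_eq (hx : ∀ α, α < μ.ord → StrictMono (x α) ∧ ∀ m, x α m < μ.ord)
    (hdisj : ∀ α β, α < μ.ord → β < μ.ord → α ≠ β → ∀ m m', x α m ≠ x β m')
    {α β : Ordinal} {m m' : Fin n} (hα : α < μ.ord) (hβ : β < μ.ord) (h : x α m = x β m') :
    α = β ∧ m = m' := by
  obtain rfl | hne := eq_or_ne α β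
  · exact ⟨rfl, (hx α hα).1.injective h⟩
  · exact absurd h (hdisj α β hα hβ hne m m')

theorem exists_realizes_succ (hc : Pr0 μ c)
    (hx : ∀ α, α < μ.ord → StrictMono (x α) ∧ ∀ m, x α m < μ.ord)
    (hdisj : ∀ α β, α < μ.ord → β < μ.ord → α ≠ β → ∀ m m', x α m ≠ x β m')
    {k : ℕ} {f : Fin (k + 1) → Fin (k + 1) → Fin n → Fin n → ℕ}
    (ih : ∀ S, IsLarge μ S → ∃ u : Fin k → Ordinal, StrictMono u ∧ (∀ i, u i ∈ S) ∧
      Realizes c x (fun i j => f i.castSucc j.castSucc) u)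
    {S : Set Ordinal} (hS : IsLarge μ S) :
    ∃ β : Fin (k + 1) → Ordinal, StrictMono β ∧ (∀ i, β i ∈ S) ∧ Realizes c x f β := by
  have hμ := hc.aleph0_le
  obtain ⟨p, hp⟩ := hS.exists_partition hμ
  have hmember : ∀ ι, ∃ u : Fin k → Ordinal, ∃ d, ι < μ.ord → StrictMono u ∧ (∀ q, u q < d) ∧
      (∀ b, (Fin.snoc u d : Fin (k + 1) → Ordinal) b ∈ {a ∈ S | p a = ι}) ∧
      Realizes c x (fun i j => f i.castSucc j.castSucc) u := by
    intro ι
    by_cases hι : ι < μ.ord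
    · obtain ⟨u, hu, huS, hreal⟩ := ih _ (hp ι hι)
      obtain ⟨d, hdS, hud⟩ := (hp ι hι).exists_forall_gt hμ u fun q => (hp ι hι).1 (huS q)
      refine ⟨u, d, fun _ => ⟨hu, hud, fun b => ?_, hreal⟩⟩
      induction b using Fin.lastCases <;> simp [huS, hdS]
    · exact ⟨0, 0, fun h => absurd h hι⟩
  choose u d hu hud hmem hreal using hmember
  have hpd : ∀ ι < μ.ord, p (d ι) = ι := fun ι hι => by simpa using (hmem ι hι (Fin.last k)).2
  have hD : IsLarge μ (d '' Iio μ.ord) := IsLarge.image_Iio_ord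
    (fun ι hι ι' hι' h => (hpd ι hι).symm.trans (h ▸ hpd ι' hι'))
    fun ι hι => hS.1 (by simpa using (hmem ι hι (Fin.last k)).1)
  obtain ⟨_, ⟨ι, hι, rfl⟩, _, ⟨ι', hι', rfl⟩, hlt, hcol⟩ := hc.exists_lt_of_injective hD
    (T := Fin (k + 1) × Fin n)
    (fun δ q => x ((Fin.snoc (u (p δ)) (d (p δ)) : Fin (k + 1) → Ordinal) q.1) q.2)
    (by
      rintro _ ⟨ι, hι, rfl⟩ q
      simpa [hpd ι hι] using (hx _ (hS.1 (hmem ι hι q.1).1)).2 q.2)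
    (by
      rintro _ ⟨ι, hι, rfl⟩ _ ⟨ι', hι', rfl⟩ ⟨b, m⟩ ⟨b', m'⟩ h
      simp only [hpd ι hι, hpd ι' hι'] at h
      obtain ⟨hbb', rfl⟩ := eq_and_eq_of_apply_eq hx hdisj (hS.1 (hmem ι hι b).1)
        (hS.1 (hmem ι' hι' b').1) h
      obtain rfl : ι = ι' := (hmem ι hι b).2.symm.trans (hbb' ▸ (hmem ι' hι' b').2)
      exact ⟨rfl, by rw [(Fin.strictMono_snoc_of_lt (hu ι hι) (hud ι hι)).injective hbb']⟩)
    fun q q' => f q.1 q'.1 q.2 q'.2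
  simp only [hpd ι hι, hpd ι' hι'] at hcol
  have hlast : ∀ i m m', c (x (u ι i) m) (x (d ι') m') = f i.castSucc (Fin.last k) m m' :=
    fun i m m' => by simpa using hcol (i.castSucc, m) (Fin.last k, m')
  refine ⟨Fin.snoc (u ι) (d ι'),
    Fin.strictMono_snoc_of_lt (hu ι hι) fun q => (hud ι hι q).trans hlt, fun b => ?_,
    (hreal ι hι).snoc hlast⟩
  induction b using Fin.lastCases with
  | last => simpa using (hmem ι' hι' (Fin.last k)).1
  | cast q => simpa using (hmem ι hι q.castSucc).1

theorem exists_realizes (hc : Pr0 μ c)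
    (hx : ∀ α, α < μ.ord → StrictMono (x α) ∧ ∀ m, x α m < μ.ord)
    (hdisj : ∀ α β, α < μ.ord → β < μ.ord → α ≠ β → ∀ m m', x α m ≠ x β m')
    {k : ℕ} (f : Fin k → Fin k → Fin n → Fin n → ℕ) {S : Set Ordinal} (hS : IsLarge μ S) :
    ∃ β : Fin k → Ordinal, StrictMono β ∧ (∀ i, β i ∈ S) ∧ Realizes c x f β := by
  induction k generalizing S with
  | zero => exact ⟨Fin.elim0, fun i => i.elim0, fun i => i.elim0, fun i => i.elim0⟩
  | succ k ih => exact hc.exists_realizes_succ hx hdisj (fun S hS => ih _ hS) hS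

end Tuples

end Pr0

/-- `Pr₀(μ,μ,ℵ₀,ℵ₀)` upgraded from pairs to `k`-tuples: one can realize any prescribed family
of colorings `f_{i,j}` (`i < j < k`) simultaneously on a `k`-tuple `β₀ < ⋯ < β_{k-1}`. -/
theorem pr0_tuples (μ : Cardinal.{0}) (c : Ordinal → Ordinal → ℕ) (hc : Pr0 μ c) :
    ∀ (k n : ℕ) (x : Ordinal → Fin n → Ordinal),
      (∀ α, α < μ.ord → StrictMono (x α) ∧ ∀ m, x α m < μ.ord) →
      (∀ α β, α < μ.ord → β < μ.ord → α ≠ β → ∀ m m', x α m ≠ x β m') →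
      ∀ f : Fin k → Fin k → Fin n → Fin n → ℕ,
        ∃ β : Fin k → Ordinal, StrictMono β ∧ (∀ i, β i < μ.ord) ∧
          ∀ i j : Fin k, i < j → ∀ m m', c (x (β i) m) (x (β j) m') = f i j m m' := by
  intro k n x hx hdisj f
  obtain ⟨β, hβ, hβμ, hreal⟩ := hc.exists_realizes hx hdisj f (isLarge_Iio_ord μ)
  exact ⟨β, hβ, hβμ, hreal⟩
end
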